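/- arXiv:2309.01400 — 7 statements merged into one kernel-verified Lean document; each statement's English description precedes it below -/
import Mathlib

section
/- Let ψ be as above (ψ'' = a ψ, a ≥ 0, ψ(1) = 1, ψ'(1) = 0) and α ≥ 0. Then for all s ∈ [0,1], 0 ≥ s^α ψ'(s) ≥ -(∫₀¹ σ^α a(σ) dσ)·exp(∫₀¹ σ a(σ) dσ). -/
/-!
Where ψ ≥ 0 the equation ψ'' = aψ makes ψ' nondecreasing, so going left from ψ(1) = 1,
ψ'(1) = 0 gives ψ' ≤ 0 and ψ ≥ 1 as long as ψ stays nonnegative. At the rightmost point of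
[0,1] where ψ ≤ 0 this is absurd, so these bounds hold on the whole interval.
The function h = ψ - sψ' then dominates ψ and satisfies h' = -s a ψ ≥ -s a h, so integrating
(log h)' from s to 1 gives ψ ≤ h ≤ exp (∫₀¹ σ a). Finally
-s^α ψ'(s) = ∫ₛ¹ s^α a ψ ≤ exp (∫₀¹ σ a) ∫₀¹ σ^α a, since s^α ≤ σ^α for σ ≥ s.
-/

open Set Real MeasureTheory intervalIntegral

theorem monotoneOn_of_hasDerivWithinAt_nonneg_of_subset {S D : Set ℝ} {f f' : ℝ → ℝ}
    (hD : Convex ℝ D) (hDS : D ⊆ S) (hf : ∀ x ∈ S, HasDerivWithinAt f (f' x) S x)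
    (hf'₀ : ∀ x ∈ interior D, 0 ≤ f' x) : MonotoneOn f D :=
  monotoneOn_of_hasDerivWithinAt_nonneg hD
    (fun x hx => (hf x (hDS hx)).continuousWithinAt.mono hDS)
    (fun x hx => (hf x (hDS (interior_subset hx))).mono (interior_subset.trans hDS)) hf'₀

theorem antitoneOn_of_hasDerivWithinAt_nonpos_of_subset {S D : Set ℝ} {f f' : ℝ → ℝ}
    (hD : Convex ℝ D) (hDS : D ⊆ S) (hf : ∀ x ∈ S, HasDerivWithinAt f (f' x) S x)
    (hf'₀ : ∀ x ∈ interior D, f' x ≤ 0) : AntitoneOn f D :=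
  antitoneOn_of_hasDerivWithinAt_nonpos hD
    (fun x hx => (hf x (hDS hx)).continuousWithinAt.mono hDS)
    (fun x hx => (hf x (hDS (interior_subset hx))).mono (interior_subset.trans hDS)) hf'₀

theorem le_mul_exp_integral_of_neg_mul_le_deriv {h h' k : ℝ → ℝ} {x y : ℝ} (hxy : x ≤ y)
    (hcont : ContinuousOn h (Icc x y)) (hderiv : ∀ t ∈ Ioo x y, HasDerivAt h (h' t) t)
    (hpos : ∀ t ∈ Icc x y, 0 < h t) (hk : IntegrableOn k (Icc x y))
    (hbound : ∀ t ∈ Ioo x y, -(k t * h t) ≤ h' t) :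
    h x ≤ h y * exp (∫ t in x..y, k t) := by
  have hlog : ∫ t in x..y, -k t ≤ log (h y) - log (h x) :=
    integral_le_sub_of_hasDeriv_right_of_le hxy (hcont.log fun t ht => (hpos t ht).ne')
      (fun t ht => ((hderiv t ht).log (hpos t (Ioo_subset_Icc_self ht)).ne').hasDerivWithinAt)
      hk.neg fun t ht => by
        rw [le_div_iff₀ (hpos t (Ioo_subset_Icc_self ht)), neg_mul]
        exact hbound t ht
  rw [intervalIntegral.integral_neg] at hlog
  have hx := hpos x (left_mem_Icc.2 hxy)
  have hy := hpos y (right_mem_Icc.2 hxy)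
  calc h x = exp (log (h x)) := (exp_log hx).symm
    _ ≤ exp (log (h y) + ∫ t in x..y, k t) := exp_le_exp.2 (by linarith)
    _ = h y * exp (∫ t in x..y, k t) := by rw [exp_add, exp_log hy]

structure IsFundamentalSolution (a ψ ψ' : ℝ → ℝ) : Prop where
  hasDerivWithinAt : ∀ s ∈ Icc (0 : ℝ) 1, HasDerivWithinAt ψ (ψ' s) (Icc 0 1) s
  hasDerivWithinAt_deriv : ∀ s ∈ Icc (0 : ℝ) 1, HasDerivWithinAt ψ' (a s * ψ s) (Icc 0 1) s
  apply_one : ψ 1 = 1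
  deriv_one : ψ' 1 = 0

namespace IsFundamentalSolution

variable {a ψ ψ' : ℝ → ℝ}

theorem continuousOn (hsol : IsFundamentalSolution a ψ ψ') : ContinuousOn ψ (Icc 0 1) :=
  fun s hs => (hsol.hasDerivWithinAt s hs).continuousWithinAt

theorem continuousOn_deriv (hsol : IsFundamentalSolution a ψ ψ') :
    ContinuousOn ψ' (Icc 0 1) :=
  fun s hs => (hsol.hasDerivWithinAt_deriv s hs).continuousWithinAt

theorem hasDerivAt (hsol : IsFundamentalSolution a ψ ψ') {s : ℝ} (hs : s ∈ Ioo (0 : ℝ) 1) :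
    HasDerivAt ψ (ψ' s) s :=
  (hsol.hasDerivWithinAt s (Ioo_subset_Icc_self hs)).hasDerivAt (Icc_mem_nhds hs.1 hs.2)

theorem hasDerivAt_deriv (hsol : IsFundamentalSolution a ψ ψ') {s : ℝ}
    (hs : s ∈ Ioo (0 : ℝ) 1) : HasDerivAt ψ' (a s * ψ s) s :=
  (hsol.hasDerivWithinAt_deriv s (Ioo_subset_Icc_self hs)).hasDerivAt (Icc_mem_nhds hs.1 hs.2)

theorem deriv_nonpos_and_one_le_of_nonneg_on_Ioo (hsol : IsFundamentalSolution a ψ ψ')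
    (ha : ∀ s ∈ Icc (0 : ℝ) 1, 0 ≤ a s) {t : ℝ} (ht : 0 ≤ t) (hpos : ∀ s ∈ Ioo t 1, 0 ≤ ψ s)
    {s : ℝ} (hs : s ∈ Icc t 1) : ψ' s ≤ 0 ∧ 1 ≤ ψ s := by
  have hsub : Icc t 1 ⊆ Icc (0 : ℝ) 1 := Icc_subset_Icc_left ht
  have hone : (1 : ℝ) ∈ Icc t 1 := ⟨hs.1.trans hs.2, le_rfl⟩
  have hψ'_mono : MonotoneOn ψ' (Icc t 1) :=
    monotoneOn_of_hasDerivWithinAt_nonneg_of_subset (convex_Icc t 1) hsub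
      hsol.hasDerivWithinAt_deriv fun x hx => by
        rw [interior_Icc] at hx
        exact mul_nonneg (ha x (hsub (Ioo_subset_Icc_self hx))) (hpos x hx)
  have hψ'_nonpos : ∀ x ∈ Icc t 1, ψ' x ≤ 0 :=
    fun x hx => hsol.deriv_one ▸ hψ'_mono hx hone hx.2
  have hψ_anti : AntitoneOn ψ (Icc t 1) :=
    antitoneOn_of_hasDerivWithinAt_nonpos_of_subset (convex_Icc t 1) hsub
      hsol.hasDerivWithinAt fun x hx => hψ'_nonpos x (interior_subset hx)
  exact ⟨hψ'_nonpos s hs, hsol.apply_one ▸ hψ_anti hs hone hs.2⟩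

theorem deriv_nonpos_and_one_le (hsol : IsFundamentalSolution a ψ ψ')
    (ha : ∀ s ∈ Icc (0 : ℝ) 1, 0 ≤ a s) {s : ℝ} (hs : s ∈ Icc (0 : ℝ) 1) :
    ψ' s ≤ 0 ∧ 1 ≤ ψ s := by
  suffices hpos : ∀ x ∈ Icc (0 : ℝ) 1, 0 < ψ x from
    hsol.deriv_nonpos_and_one_le_of_nonneg_on_Ioo ha le_rfl
      (fun x hx => (hpos x (Ioo_subset_Icc_self hx)).le) hs
  by_contra! hzero
  obtain ⟨x₀, hx₀, hψx₀⟩ := hzero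
  set Z := Icc (0 : ℝ) 1 ∩ ψ ⁻¹' Iic 0
  have hZ : IsCompact Z := isCompact_Icc.of_isClosed_subset
    (hsol.continuousOn.preimage_isClosed_of_isClosed isClosed_Icc isClosed_Iic) inter_subset_left
  obtain ⟨hm, hψm : ψ (sSup Z) ≤ 0⟩ : sSup Z ∈ Z := hZ.sSup_mem ⟨x₀, hx₀, hψx₀⟩
  have hpos : ∀ x ∈ Ioo (sSup Z) 1, 0 ≤ ψ x := fun x hx => by
    by_contra! hx'
    exact (le_csSup hZ.bddAbove ⟨⟨hm.1.trans hx.1.le, hx.2.le⟩, hx'.le⟩).not_gt hx.1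
  have := (hsol.deriv_nonpos_and_one_le_of_nonneg_on_Ioo ha hm.1 hpos ⟨le_rfl, hm.2⟩).2
  linarith

theorem le_exp_integral (hsol : IsFundamentalSolution a ψ ψ')
    (ha_cont : ContinuousOn a (Icc 0 1)) (ha : ∀ s ∈ Icc (0 : ℝ) 1, 0 ≤ a s) {s : ℝ}
    (hs : s ∈ Icc (0 : ℝ) 1) : ψ s ≤ exp (∫ σ in (0 : ℝ)..1, σ * a σ) := by
  set h : ℝ → ℝ := fun t => ψ t - t * ψ' t
  have hψ_le_h : ∀ t ∈ Icc (0 : ℝ) 1, ψ t ≤ h t := fun t ht => by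
    have := mul_nonpos_of_nonneg_of_nonpos ht.1 (hsol.deriv_nonpos_and_one_le ha ht).1
    simp only [h]
    linarith
  have hsub : Icc s 1 ⊆ Icc (0 : ℝ) 1 := Icc_subset_Icc_left hs.1
  have hk : ContinuousOn (fun σ => σ * a σ) (Icc 0 1) := continuousOn_id.mul ha_cont
  have hh_deriv : ∀ t ∈ Ioo s 1, HasDerivAt h (-(t * (a t * ψ t))) t := fun t ht => by
    have ht' : t ∈ Ioo (0 : ℝ) 1 := ⟨hs.1.trans_lt ht.1, ht.2⟩
    exact ((hsol.hasDerivAt ht').sub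
      ((hasDerivAt_id' t).mul (hsol.hasDerivAt_deriv ht'))).congr_deriv (by ring)
  have hh_pos : ∀ t ∈ Icc s 1, 0 < h t := fun t ht =>
    one_pos.trans_le ((hsol.deriv_nonpos_and_one_le ha (hsub ht)).2.trans (hψ_le_h t (hsub ht)))
  have hgronwall : h s ≤ h 1 * exp (∫ σ in s..1, σ * a σ) :=
    le_mul_exp_integral_of_neg_mul_le_deriv hs.2
      ((hsol.continuousOn.sub (continuousOn_id.mul hsol.continuousOn_deriv)).mono hsub)
      hh_deriv hh_pos (hk.mono hsub).integrableOn_Icc fun t ht => by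
        have ht' := hsub (Ioo_subset_Icc_self ht)
        have := mul_le_mul_of_nonneg_left (hψ_le_h t ht') (mul_nonneg ht'.1 (ha t ht'))
        linarith
  have h_one : h 1 = 1 := by simp [h, hsol.apply_one, hsol.deriv_one]
  have hmono : ∫ σ in s..1, σ * a σ ≤ ∫ σ in (0 : ℝ)..1, σ * a σ :=
    integral_mono_interval hs.1 hs.2 le_rfl
      (ae_restrict_of_forall_mem measurableSet_Ioc fun x hx =>
        mul_nonneg hx.1.le (ha x (Ioc_subset_Icc_self hx)))
      (hk.intervalIntegrable_of_Icc zero_le_one)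
  calc ψ s ≤ h s := hψ_le_h s hs
    _ ≤ exp (∫ σ in s..1, σ * a σ) := by simpa [h_one] using hgronwall
    _ ≤ exp (∫ σ in (0 : ℝ)..1, σ * a σ) := exp_le_exp.2 hmono

theorem neg_integral_mul_exp_le_rpow_mul_deriv (hsol : IsFundamentalSolution a ψ ψ') {α : ℝ}
    (hα : 0 ≤ α) (ha_cont : ContinuousOn a (Icc 0 1)) (ha : ∀ s ∈ Icc (0 : ℝ) 1, 0 ≤ a s)
    {s : ℝ} (hs : s ∈ Icc (0 : ℝ) 1) :
    -(∫ σ in (0 : ℝ)..1, σ ^ α * a σ) * exp (∫ σ in (0 : ℝ)..1, σ * a σ) ≤ s ^ α * ψ' s := by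
  set C := exp (∫ σ in (0 : ℝ)..1, σ * a σ)
  have hsub : Icc s 1 ⊆ Icc (0 : ℝ) 1 := Icc_subset_Icc_left hs.1
  have hw : ContinuousOn (fun σ => σ ^ α * a σ * C) (Icc 0 1) :=
    ((continuousOn_id.rpow_const fun _ _ => Or.inr hα).mul ha_cont).mul continuousOn_const
  have hftc : s ^ α * ψ' 1 - s ^ α * ψ' s ≤ ∫ σ in s..1, σ ^ α * a σ * C := by
    refine sub_le_integral_of_hasDeriv_right_of_le hs.2
      ((continuousOn_const.mul hsol.continuousOn_deriv).mono hsub)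
      (fun t ht => ((hsol.hasDerivAt_deriv ⟨hs.1.trans_lt ht.1, ht.2⟩).const_mul
        (s ^ α)).hasDerivWithinAt) (hw.mono hsub).integrableOn_Icc fun t ht => ?_
    have ht' := hsub (Ioo_subset_Icc_self ht)
    obtain ⟨-, hψ_ge⟩ := hsol.deriv_nonpos_and_one_le ha ht'
    calc s ^ α * (a t * ψ t) ≤ t ^ α * (a t * ψ t) :=
          mul_le_mul_of_nonneg_right (rpow_le_rpow hs.1 ht.1.le hα)
            (mul_nonneg (ha t ht') (zero_le_one.trans hψ_ge))
      _ = t ^ α * a t * ψ t := by ring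
      _ ≤ t ^ α * a t * C := mul_le_mul_of_nonneg_left (hsol.le_exp_integral ha_cont ha ht')
          (mul_nonneg (rpow_nonneg ht'.1 α) (ha t ht'))
  have hmono : ∫ σ in s..1, σ ^ α * a σ * C ≤ ∫ σ in (0 : ℝ)..1, σ ^ α * a σ * C :=
    integral_mono_interval hs.1 hs.2 le_rfl
      (ae_restrict_of_forall_mem measurableSet_Ioc fun x hx =>
        mul_nonneg (mul_nonneg (rpow_nonneg hx.1.le α) (ha x (Ioc_subset_Icc_self hx)))
          (exp_pos _).le)
      (hw.intervalIntegrable_of_Icc zero_le_one)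
  simp only [intervalIntegral.integral_mul_const] at hmono hftc
  rw [hsol.deriv_one, mul_zero] at hftc
  linarith

end IsFundamentalSolution

/-- Weighted bound for the derivative of the fundamental solution `ψ`:
for `α ≥ 0`, `0 ≥ s^α ψ'(s) ≥ -(∫₀¹ σ^α a(σ) dσ) exp(∫₀¹ σ a(σ) dσ)`. -/
theorem stmt_3 (a ψ ψ' : ℝ → ℝ) (α : ℝ) (hα : 0 ≤ α)
    (ha_cont : ContinuousOn a (Set.Icc 0 1))
    (ha_nonneg : ∀ s ∈ Set.Icc (0:ℝ) 1, 0 ≤ a s)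
    (hψ : ∀ s ∈ Set.Icc (0:ℝ) 1, HasDerivWithinAt ψ (ψ' s) (Set.Icc 0 1) s)
    (hψ' : ∀ s ∈ Set.Icc (0:ℝ) 1, HasDerivWithinAt ψ' (a s * ψ s) (Set.Icc 0 1) s)
    (h0 : ψ 1 = 1) (h1 : ψ' 1 = 0) :
    ∀ s ∈ Set.Icc (0:ℝ) 1,
      s ^ α * ψ' s ≤ 0 ∧
      -(∫ σ in (0:ℝ)..1, σ ^ α * a σ) * Real.exp (∫ σ in (0:ℝ)..1, σ * a σ)
        ≤ s ^ α * ψ' s := by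
  have hsol : IsFundamentalSolution a ψ ψ' := ⟨hψ, hψ', h0, h1⟩
  intro s hs
  exact ⟨mul_nonpos_of_nonneg_of_nonpos (rpow_nonneg hs.1 α)
      (hsol.deriv_nonpos_and_one_le ha_nonneg hs).1,
    hsol.neg_integral_mul_exp_le_rpow_mul_deriv hα ha_cont ha_nonneg hs⟩
end

section
/- Let 1 ≤ p < ∞ and α ∈ ℝ with α + 1/p > 0. Define H(s) = ∫_s^1 h(σ) dσ for h ∈ L¹(0,1). Then (∫₀¹ s^{αp} |H(s)|^p ds)^{1/p} ≤ (α + 1/p)^{-1/p} · ∫₀¹ s^{α+1/p} |h(s)| ds. -/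
/-!
With `β = α + 1/p` and `F(s) = ∫_s^1 |h|`, monotonicity of `σ ↦ σ^β` gives
`s^β F(s) ≤ C := ∫_0^1 σ^β |h|`. Spending this bound on `p - 1` of the `p` factors of `F(s)^p`
leaves `s^{αp} |H(s)|^p ≤ C^{p-1} s^{β-1} F(s)`, and by Fubini `∫_0^1 s^{β-1} F(s) ds = C / β`.
Hence `∫_0^1 s^{αp} |H|^p ≤ C^p / β`.
-/

open MeasureTheory Set
open scoped ENNReal

theorem lintegral_Ioc_mul_lintegral_Ioc_swap {w g : ℝ → ℝ≥0∞} {a b : ℝ} (hw : Measurable w)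
    (hg : AEMeasurable g (volume.restrict (Ioc a b))) :
    ∫⁻ s in Ioc a b, w s * ∫⁻ σ in Ioc s b, g σ
      = ∫⁻ σ in Ioc a b, g σ * ∫⁻ s in Ioo a σ, w s := by
  set f : ℝ → ℝ → ℝ≥0∞ := fun s σ => if s < σ then w s * g σ else 0
  have hf : AEMeasurable (Function.uncurry f)
      ((volume.restrict (Ioc a b)).prod (volume.restrict (Ioc a b))) :=
    ((hw.aemeasurable.comp_quasiMeasurePreserving Measure.quasiMeasurePreserving_fst).mul
      (hg.comp_quasiMeasurePreserving Measure.quasiMeasurePreserving_snd)).indicator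
      (measurableSet_lt measurable_fst measurable_snd)
  have integral_snd : EqOn (fun s => w s * ∫⁻ σ in Ioc s b, g σ)
      (fun s => ∫⁻ σ in Ioc a b, f s σ) (Ioc a b) := by
    intro s hs
    have hIoc : Ioi s ∩ Ioc a b = Ioc s b := by
      rw [inter_comm, Ioc_inter_Ioi, sup_eq_right.2 hs.1.le]
    calc w s * ∫⁻ σ in Ioc s b, g σ = ∫⁻ σ in Ioc s b, w s * g σ :=
          (lintegral_const_mul'' _ (hg.mono_set (Ioc_subset_Ioc_left hs.1.le))).symm
      _ = ∫⁻ σ in Ioc a b, (Ioi s).indicator (fun σ => w s * g σ) σ := by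
          rw [lintegral_indicator measurableSet_Ioi, Measure.restrict_restrict measurableSet_Ioi,
            hIoc]
      _ = ∫⁻ σ in Ioc a b, f s σ := by simp only [f, indicator_apply, mem_Ioi]
  have integral_fst : EqOn (fun σ => ∫⁻ s in Ioc a b, f s σ)
      (fun σ => g σ * ∫⁻ s in Ioo a σ, w s) (Ioc a b) := by
    intro σ hσ
    have hIoo : Iio σ ∩ Ioc a b = Ioo a σ := by
      ext s
      simp only [mem_inter_iff, mem_Iio, mem_Ioc, mem_Ioo]
      constructor
      · rintro ⟨hsσ, has, -⟩; exact ⟨has, hsσ⟩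
      · rintro ⟨has, hsσ⟩; exact ⟨hsσ, has, hsσ.le.trans hσ.2⟩
    calc ∫⁻ s in Ioc a b, f s σ = ∫⁻ s in Ioc a b, (Iio σ).indicator (fun s => g σ * w s) s := by
          simp only [f, indicator_apply, mem_Iio, mul_comm]
      _ = g σ * ∫⁻ s in Ioo a σ, w s := by
          rw [lintegral_indicator measurableSet_Iio, Measure.restrict_restrict measurableSet_Iio,
            hIoo, lintegral_const_mul _ hw]
  rw [setLIntegral_congr_fun measurableSet_Ioc integral_snd, lintegral_lintegral_swap hf,
    setLIntegral_congr_fun measurableSet_Ioc integral_fst]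

theorem lintegral_Ioo_rpow_sub_one {β x : ℝ} (hβ : 0 < β) (hx : 0 ≤ x) :
    ∫⁻ s in Ioo 0 x, ENNReal.ofReal (s ^ (β - 1)) = ENNReal.ofReal (x ^ β / β) := by
  have hβ1 : -1 < β - 1 := by linarith
  rw [Measure.restrict_congr_set Ioo_ae_eq_Ioc, ← ofReal_integral_eq_lintegral_ofReal
    (intervalIntegral.intervalIntegrable_rpow' hβ1).1
    (ae_restrict_of_forall_mem measurableSet_Ioc fun s hs => Real.rpow_nonneg hs.1.le _),
    ← intervalIntegral.integral_of_le hx, integral_rpow (Or.inl hβ1), sub_add_cancel,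
    Real.zero_rpow hβ.ne', sub_zero]

section TailIntegral

variable {β b : ℝ} {g : ℝ → ℝ}

theorem intervalIntegrable_rpow_sub_one_mul_integral (hβ : 0 < β)
    (hg : IntervalIntegrable g volume 0 b) :
    IntervalIntegrable (fun s => s ^ (β - 1) * ∫ σ in s..b, g σ) volume 0 b :=
  (intervalIntegral.intervalIntegrable_rpow' (by linarith)).mul_continuousOn
    (intervalIntegral.continuousOn_primitive_interval_left ((intervalIntegrable_iff').1 hg))

theorem rpow_mul_integral_le_integral_rpow_mul {s : ℝ} (hβ : 0 ≤ β) (hg0 : 0 ≤ g)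
    (hg : IntervalIntegrable g volume 0 b) (hs : s ∈ Icc 0 b) :
    s ^ β * ∫ σ in s..b, g σ ≤ ∫ σ in 0..b, σ ^ β * g σ := by
  have hsub : uIcc s b ⊆ uIcc 0 b := uIcc_subset_uIcc_right (Icc_subset_uIcc hs)
  have hint : IntervalIntegrable (fun σ => σ ^ β * g σ) volume 0 b :=
    hg.continuousOn_mul (Real.continuous_rpow_const hβ).continuousOn
  calc s ^ β * ∫ σ in s..b, g σ = ∫ σ in s..b, s ^ β * g σ :=
        (intervalIntegral.integral_const_mul _ _).symm
    _ ≤ ∫ σ in s..b, σ ^ β * g σ :=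
        intervalIntegral.integral_mono_on hs.2 ((hg.mono_set hsub).const_mul _)
          (hint.mono_set hsub)
          fun σ hσ => mul_le_mul_of_nonneg_right (Real.rpow_le_rpow hs.1 hσ.1 hβ) (hg0 σ)
    _ ≤ ∫ σ in 0..b, σ ^ β * g σ :=
        intervalIntegral.integral_mono_interval hs.1 hs.2 le_rfl
          (ae_restrict_of_forall_mem measurableSet_Ioc fun σ hσ =>
            mul_nonneg (Real.rpow_nonneg hσ.1.le _) (hg0 σ)) hint

theorem integral_rpow_sub_one_mul_integral (hβ : 0 < β) (hb : 0 ≤ b) (hg0 : 0 ≤ g)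
    (hg : IntervalIntegrable g volume 0 b) :
    ∫ s in 0..b, s ^ (β - 1) * ∫ σ in s..b, g σ = (∫ σ in 0..b, σ ^ β * g σ) / β := by
  have hL := intervalIntegrable_rpow_sub_one_mul_integral hβ hg
  have hR : IntervalIntegrable (fun σ => σ ^ β * g σ / β) volume 0 b :=
    (hg.continuousOn_mul (Real.continuous_rpow_const hβ.le).continuousOn).div_const β
  rw [← intervalIntegral.integral_div, intervalIntegral.integral_of_le hb,
    intervalIntegral.integral_of_le hb]
  rw [intervalIntegrable_iff_integrableOn_Ioc_of_le hb] at hL hR hg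
  have hL0 : ∀ s ∈ Ioc 0 b, 0 ≤ s ^ (β - 1) * ∫ σ in s..b, g σ := fun s hs =>
    mul_nonneg (Real.rpow_nonneg hs.1.le _) (intervalIntegral.integral_nonneg hs.2 fun σ _ => hg0 σ)
  have hR0 : ∀ σ ∈ Ioc 0 b, 0 ≤ σ ^ β * g σ / β := fun σ hσ =>
    div_nonneg (mul_nonneg (Real.rpow_nonneg hσ.1.le _) (hg0 σ)) hβ.le
  -- Compare in `ℝ≥0∞`, where Tonelli needs no integrability of the integrand on the square.
  refine (ENNReal.ofReal_eq_ofReal_iff (setIntegral_nonneg measurableSet_Ioc hL0)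
    (setIntegral_nonneg measurableSet_Ioc hR0)).1 ?_
  rw [ofReal_integral_eq_lintegral_ofReal hL (ae_restrict_of_forall_mem measurableSet_Ioc hL0),
    ofReal_integral_eq_lintegral_ofReal hR (ae_restrict_of_forall_mem measurableSet_Ioc hR0)]
  calc ∫⁻ s in Ioc 0 b, ENNReal.ofReal (s ^ (β - 1) * ∫ σ in s..b, g σ)
      = ∫⁻ s in Ioc 0 b, ENNReal.ofReal (s ^ (β - 1)) * ∫⁻ σ in Ioc s b, ENNReal.ofReal (g σ) :=
        setLIntegral_congr_fun measurableSet_Ioc fun s hs => by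
          rw [ENNReal.ofReal_mul (Real.rpow_nonneg hs.1.le _), intervalIntegral.integral_of_le hs.2,
            ofReal_integral_eq_lintegral_ofReal (hg.mono_set (Ioc_subset_Ioc_left hs.1.le))
              (ae_of_all _ hg0)]
    _ = ∫⁻ σ in Ioc 0 b, ENNReal.ofReal (g σ) * ∫⁻ s in Ioo 0 σ, ENNReal.ofReal (s ^ (β - 1)) :=
        lintegral_Ioc_mul_lintegral_Ioc_swap (by fun_prop) hg.aemeasurable.ennreal_ofReal
    _ = ∫⁻ σ in Ioc 0 b, ENNReal.ofReal (σ ^ β * g σ / β) :=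
        setLIntegral_congr_fun measurableSet_Ioc fun σ hσ => by
          rw [lintegral_Ioo_rpow_sub_one hβ hσ.1.le, ← ENNReal.ofReal_mul (hg0 σ)]
          ring_nf

end TailIntegral

theorem rpow_mul_rpow_le_of_rpow_mul_le {s F C α p : ℝ} (hp : 1 ≤ p) (hs : 0 < s) (hF : 0 ≤ F)
    (hFC : s ^ (α + 1 / p) * F ≤ C) :
    s ^ (α * p) * F ^ p ≤ C ^ (p - 1) * (s ^ (α + 1 / p - 1) * F) := by
  have hp0 : p ≠ 0 := by positivity
  have hs_exp : s ^ (α * p) = s ^ ((α + 1 / p) * (p - 1)) * s ^ (α + 1 / p - 1) := by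
    rw [← Real.rpow_add hs]
    congr 1
    field_simp
    ring
  have hF_exp : F ^ p = F ^ (p - 1) * F := by
    rw [← Real.rpow_add_one' hF (by simpa using hp0), sub_add_cancel]
  calc s ^ (α * p) * F ^ p = (s ^ (α + 1 / p) * F) ^ (p - 1) * (s ^ (α + 1 / p - 1) * F) := by
        rw [hs_exp, hF_exp, Real.mul_rpow (Real.rpow_nonneg hs.le _) hF, ← Real.rpow_mul hs.le]
        ring
    _ ≤ C ^ (p - 1) * (s ^ (α + 1 / p - 1) * F) := by gcongr

section Hardy

variable {p α b : ℝ} {h : ℝ → ℝ}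

theorem rpow_mul_abs_integral_rpow_le (hp : 1 ≤ p) (hα : 0 < α + 1 / p)
    (hh : IntervalIntegrable h volume 0 b) {s : ℝ} (hs : s ∈ Ioc 0 b) :
    s ^ (α * p) * |∫ σ in s..b, h σ| ^ p
      ≤ (∫ σ in 0..b, σ ^ (α + 1 / p) * |h σ|) ^ (p - 1)
        * (s ^ (α + 1 / p - 1) * ∫ σ in s..b, |h σ|) :=
  calc s ^ (α * p) * |∫ σ in s..b, h σ| ^ p ≤ s ^ (α * p) * (∫ σ in s..b, |h σ|) ^ p := by
        gcongr
        · exact Real.rpow_nonneg hs.1.le _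
        · exact intervalIntegral.abs_integral_le_integral_abs hs.2
    _ ≤ _ :=
        rpow_mul_rpow_le_of_rpow_mul_le hp hs.1
          (intervalIntegral.integral_nonneg hs.2 fun _ _ => abs_nonneg _)
          (rpow_mul_integral_le_integral_rpow_mul hα.le (fun _ => abs_nonneg _) hh.abs
            (Ioc_subset_Icc_self hs))

theorem integral_rpow_mul_abs_integral_rpow_le (hp : 1 ≤ p) (hα : 0 < α + 1 / p) (hb : 0 ≤ b)
    (hh : IntervalIntegrable h volume 0 b) :
    ∫ s in 0..b, s ^ (α * p) * |∫ σ in s..b, h σ| ^ p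
      ≤ (∫ σ in 0..b, σ ^ (α + 1 / p) * |h σ|) ^ p / (α + 1 / p) := by
  set C := ∫ σ in 0..b, σ ^ (α + 1 / p) * |h σ|
  have hC : 0 ≤ C := intervalIntegral.integral_nonneg hb fun σ hσ =>
    mul_nonneg (Real.rpow_nonneg hσ.1 _) (abs_nonneg _)
  calc ∫ s in 0..b, s ^ (α * p) * |∫ σ in s..b, h σ| ^ p
      ≤ ∫ s in 0..b, C ^ (p - 1) * (s ^ (α + 1 / p - 1) * ∫ σ in s..b, |h σ|) := by
        simp only [intervalIntegral.integral_of_le hb]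
        exact integral_mono_of_nonneg
          (ae_restrict_of_forall_mem measurableSet_Ioc fun s hs =>
            mul_nonneg (Real.rpow_nonneg hs.1.le _) (Real.rpow_nonneg (abs_nonneg _) _))
          ((intervalIntegrable_rpow_sub_one_mul_integral hα hh.abs).const_mul _).1
          (ae_restrict_of_forall_mem measurableSet_Ioc fun s hs =>
            rpow_mul_abs_integral_rpow_le hp hα hh hs)
    _ = C ^ (p - 1) * (C / (α + 1 / p)) := by
        rw [intervalIntegral.integral_const_mul,
          integral_rpow_sub_one_mul_integral hα hb (fun _ => abs_nonneg _) hh.abs]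
    _ = C ^ p / (α + 1 / p) := by
        rw [← mul_div_assoc, ← Real.rpow_add_one' hC (by linarith), sub_add_cancel]

end Hardy

/-- Hardy-type inequality for the tail integral `H(s) = ∫_s¹ h`:
`‖s^α H‖_{L^p} ≤ (α + 1/p)^{-1/p} ‖s^{α+1/p} h‖_{L¹}` for `1 ≤ p < ∞`, `α + 1/p > 0`. -/
theorem stmt_4 (p α : ℝ) (hp : 1 ≤ p) (hα : 0 < α + 1 / p)
    (h : ℝ → ℝ) (hh : IntegrableOn h (Set.Ioc 0 1)) :
    (∫ s in (0:ℝ)..1, s ^ (α * p) * |∫ σ in s..1, h σ| ^ p) ^ (1 / p)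
      ≤ (α + 1 / p) ^ (-(1 / p)) * ∫ s in (0:ℝ)..1, s ^ (α + 1 / p) * |h s| := by
  have hp0 : 0 < p := by linarith
  have hHardy := integral_rpow_mul_abs_integral_rpow_le hp hα zero_le_one
    ((intervalIntegrable_iff_integrableOn_Ioc_of_le zero_le_one).2 hh)
  set β := α + 1 / p
  set C := ∫ s in (0:ℝ)..1, s ^ β * |h s|
  have hLHS : 0 ≤ ∫ s in (0:ℝ)..1, s ^ (α * p) * |∫ σ in s..1, h σ| ^ p :=
    intervalIntegral.integral_nonneg zero_le_one fun s hs =>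
      mul_nonneg (Real.rpow_nonneg hs.1 _) (Real.rpow_nonneg (abs_nonneg _) _)
  have hC : 0 ≤ C := intervalIntegral.integral_nonneg zero_le_one fun s hs =>
    mul_nonneg (Real.rpow_nonneg hs.1 _) (abs_nonneg _)
  rw [one_div p, Real.rpow_inv_le_iff_of_pos hLHS (by positivity) hp0,
    Real.mul_rpow (by positivity) hC, ← Real.rpow_mul hα.le, neg_mul, inv_mul_cancel₀ hp0.ne',
    Real.rpow_neg_one, ← div_eq_inv_mul]
  exact hHardy
end

section
/- Let 1 ≤ p < ∞, α, β ∈ ℝ with α + 1 > β + 1/p, and u ∈ L^p(0,1) with s^β u ∈ L^p. Define U_α(s) = s^{-(α+1)} ∫₀^s σ^α u(σ) dσ. Then ‖s^β U_α‖_{L^p(0,1)} ≤ (α − β + 1 − 1/p)^{-1} ‖s^β u‖_{L^p(0,1)}. -/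
open MeasureTheory Set
open scoped ENNReal

/-!
With `κ = α - β + 1 - 1/p > 0` and `v σ = σ ^ β * |u σ|`, Hölder's inequality against the weight
`σ ^ (κ - 1)` on `(0, s)` gives
`(s ^ (β - α - 1) * ∫₀ˢ σ ^ (α - β) v) ^ p ≤ κ ^ (1 - p) * s ^ (-κ - 1) * ∫₀ˢ σ ^ κ v ^ p`.
Integrating in `s` and exchanging the order of integration, the inner integral
`∫_σ^1 s ^ (-κ - 1) ds ≤ σ ^ (-κ) / κ` cancels `σ ^ κ`, which leaves `κ ^ (-p) * ∫₀¹ v ^ p`.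
Working with `ℝ≥0∞`-valued integrals removes all integrability side conditions.
-/

lemma lintegral_Ioc_zero_ofReal_rpow {r s : ℝ} (hr : -1 < r) (hs : 0 ≤ s) :
    ∫⁻ σ in Ioc 0 s, ENNReal.ofReal σ ^ r =
      ENNReal.ofReal (r + 1)⁻¹ * ENNReal.ofReal s ^ (r + 1) := by
  have hint : IntegrableOn (fun σ : ℝ => σ ^ r) (Ioc 0 s) :=
    (intervalIntegrable_iff_integrableOn_Ioc_of_le hs).mp
      (intervalIntegral.intervalIntegrable_rpow' hr)
  rw [setLIntegral_congr_fun measurableSet_Ioc fun σ hσ => ENNReal.ofReal_rpow_of_pos hσ.1,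
    ← ofReal_integral_eq_lintegral_ofReal hint
      (ae_restrict_of_forall_mem measurableSet_Ioc fun σ hσ => Real.rpow_nonneg hσ.1.le r),
    ← intervalIntegral.integral_of_le hs, integral_rpow (Or.inl hr),
    Real.zero_rpow (by linarith), sub_zero, div_eq_inv_mul,
    ENNReal.ofReal_mul (inv_nonneg.2 (by linarith)),
    ENNReal.ofReal_rpow_of_nonneg hs (by linarith)]

lemma lintegral_Ioi_ofReal_rpow {κ σ : ℝ} (hκ : 0 < κ) (hσ : 0 < σ) :
    ∫⁻ s in Ioi σ, ENNReal.ofReal s ^ (-κ - 1) = ENNReal.ofReal κ⁻¹ * ENNReal.ofReal σ ^ (-κ) := by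
  have hlt : -κ - 1 < -1 := by linarith
  rw [setLIntegral_congr_fun measurableSet_Ioi fun s hs => ENNReal.ofReal_rpow_of_pos (hσ.trans hs),
    ← ofReal_integral_eq_lintegral_ofReal (integrableOn_Ioi_rpow_of_lt hlt hσ)
      (ae_restrict_of_forall_mem measurableSet_Ioi fun s hs => Real.rpow_nonneg (hσ.trans hs).le _),
    integral_Ioi_rpow_of_lt hlt hσ, ENNReal.ofReal_rpow_of_pos hσ,
    ← ENNReal.ofReal_mul (inv_nonneg.2 hκ.le)]
  congr 1
  rw [show -κ - 1 + 1 = -κ by ring]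
  field_simp

lemma lintegral_Ioc_mul_lintegral_Ioc_comm {A B : ℝ → ℝ≥0∞} (hA : Measurable A)
    (hB : Measurable B) (a b : ℝ) :
    ∫⁻ s in Ioc a b, A s * ∫⁻ σ in Ioc a s, B σ =
      ∫⁻ σ in Ioc a b, B σ * ∫⁻ s in Icc σ b, A s := by
  let F : ℝ → ℝ → ℝ≥0∞ := fun s σ => if σ ≤ s then A s * B σ else 0
  have hF : Measurable (Function.uncurry F) :=
    Measurable.ite (measurableSet_le measurable_snd measurable_fst)
      ((hA.comp measurable_fst).mul (hB.comp measurable_snd)) measurable_const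
  calc ∫⁻ s in Ioc a b, A s * ∫⁻ σ in Ioc a s, B σ
      = ∫⁻ s in Ioc a b, ∫⁻ σ in Ioc a b, F s σ := by
        refine setLIntegral_congr_fun measurableSet_Ioc fun s hs => ?_
        have : F s = (Iic s).indicator fun σ => A s * B σ := by
          ext σ; simp [F, indicator]
        rw [this, setLIntegral_indicator measurableSet_Iic, inter_comm, Ioc_inter_Iic,
          inf_eq_right.2 hs.2, lintegral_const_mul _ hB]
    _ = ∫⁻ σ in Ioc a b, ∫⁻ s in Ioc a b, F s σ := lintegral_lintegral_swap hF.aemeasurable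
    _ = ∫⁻ σ in Ioc a b, B σ * ∫⁻ s in Icc σ b, A s := by
        refine setLIntegral_congr_fun measurableSet_Ioc fun σ hσ => ?_
        have hFσ : (fun s => F s σ) = (Ici σ).indicator fun s => A s * B σ := by
          ext s; simp [F, indicator]
        have hset : Ici σ ∩ Ioc a b = Icc σ b := by
          ext s; simp only [mem_inter_iff, mem_Ioc, mem_Ici, mem_Icc]
          exact ⟨fun h => ⟨h.1, h.2.2⟩, fun h => ⟨h.1, hσ.1.trans_le h.1, h.2⟩⟩
        rw [hFσ, setLIntegral_indicator measurableSet_Ici, hset, lintegral_mul_const _ hA, mul_comm]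

lemma lintegral_Ioc_rpow_mul_rpow_le {γ κ p s : ℝ} (hp : 1 ≤ p) (hκ : 0 < κ)
    (hγ : γ = κ - 1 + 1 / p) (hs : 0 ≤ s) {f : ℝ → ℝ≥0∞}
    (hf : AEMeasurable f (volume.restrict (Ioc 0 s))) :
    (∫⁻ σ in Ioc 0 s, ENNReal.ofReal σ ^ γ * f σ) ^ p ≤
      (ENNReal.ofReal κ⁻¹ * ENNReal.ofReal s ^ κ) ^ (p - 1) *
        ∫⁻ σ in Ioc 0 s, ENNReal.ofReal σ ^ κ * f σ ^ p := by
  have hp0 : 0 < p := one_pos.trans_le hp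
  have hq : 0 ≤ 1 - 1 / p := by rw [sub_nonneg, div_le_one hp0]; exact hp
  have hsplit : ∀ σ ∈ Ioc (0 : ℝ) s, ENNReal.ofReal σ ^ γ * f σ =
      (ENNReal.ofReal σ ^ κ * f σ ^ p) ^ (1 / p) * (ENNReal.ofReal σ ^ (κ - 1)) ^ (1 - 1 / p) := by
    intro σ hσ
    have h0 : ENNReal.ofReal σ ≠ 0 := by simpa using hσ.1
    rw [ENNReal.mul_rpow_of_nonneg _ _ (by positivity), ← ENNReal.rpow_mul, ← ENNReal.rpow_mul,
      ← ENNReal.rpow_mul, mul_one_div_cancel hp0.ne', ENNReal.rpow_one, mul_right_comm,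
      ← ENNReal.rpow_add _ _ h0 ENNReal.ofReal_ne_top, hγ]
    congr 2
    field_simp
    ring
  have holder := ENNReal.lintegral_mul_norm_pow_le
    ((Measurable.aemeasurable (by fun_prop)).mul (hf.pow_const p))
    (Measurable.aemeasurable (by fun_prop)) (by positivity) hq (add_sub_cancel _ _)
    (μ := volume.restrict (Ioc 0 s)) (f := fun σ : ℝ => ENNReal.ofReal σ ^ κ * f σ ^ p)
    (g := fun σ : ℝ => ENNReal.ofReal σ ^ (κ - 1))
  rw [← setLIntegral_congr_fun measurableSet_Ioc hsplit,
    lintegral_Ioc_zero_ofReal_rpow (by linarith) hs, sub_add_cancel] at holder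
  calc (∫⁻ σ in Ioc 0 s, ENNReal.ofReal σ ^ γ * f σ) ^ p
      ≤ ((∫⁻ σ in Ioc 0 s, ENNReal.ofReal σ ^ κ * f σ ^ p) ^ (1 / p) *
          (ENNReal.ofReal κ⁻¹ * ENNReal.ofReal s ^ κ) ^ (1 - 1 / p)) ^ p :=
        ENNReal.rpow_le_rpow holder hp0.le
    _ = _ := by
        rw [ENNReal.mul_rpow_of_nonneg _ _ hp0.le, ← ENNReal.rpow_mul, ← ENNReal.rpow_mul,
          one_div_mul_cancel hp0.ne', ENNReal.rpow_one, mul_comm,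
          show (1 - 1 / p) * p = p - 1 by field_simp]

lemma rpow_mul_lintegral_Ioc_le {γ κ p s : ℝ} (hp : 1 ≤ p) (hκ : 0 < κ)
    (hγ : γ = κ - 1 + 1 / p) (hs : 0 < s) {f : ℝ → ℝ≥0∞}
    (hf : AEMeasurable f (volume.restrict (Ioc 0 s))) :
    (ENNReal.ofReal s ^ (-(γ + 1)) * ∫⁻ σ in Ioc 0 s, ENNReal.ofReal σ ^ γ * f σ) ^ p ≤
      ENNReal.ofReal κ⁻¹ ^ (p - 1) * (ENNReal.ofReal s ^ (-κ - 1) *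
        ∫⁻ σ in Ioc 0 s, ENNReal.ofReal σ ^ κ * f σ ^ p) := by
  have hp0 : 0 < p := one_pos.trans_le hp
  have h0 : ENNReal.ofReal s ≠ 0 := by simpa using hs
  have hexp : ENNReal.ofReal s ^ (-(γ + 1) * p) * ENNReal.ofReal s ^ (κ * (p - 1)) =
      ENNReal.ofReal s ^ (-κ - 1) := by
    rw [← ENNReal.rpow_add _ _ h0 ENNReal.ofReal_ne_top, hγ]
    congr 1
    field_simp
    ring
  calc _ = ENNReal.ofReal s ^ (-(γ + 1) * p) *
          (∫⁻ σ in Ioc 0 s, ENNReal.ofReal σ ^ γ * f σ) ^ p := by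
        rw [ENNReal.mul_rpow_of_nonneg _ _ hp0.le, ← ENNReal.rpow_mul]
    _ ≤ ENNReal.ofReal s ^ (-(γ + 1) * p) * ((ENNReal.ofReal κ⁻¹ * ENNReal.ofReal s ^ κ) ^ (p - 1) *
          ∫⁻ σ in Ioc 0 s, ENNReal.ofReal σ ^ κ * f σ ^ p) := by
        gcongr
        exact lintegral_Ioc_rpow_mul_rpow_le hp hκ hγ hs.le hf
    _ = _ := by
        rw [ENNReal.mul_rpow_of_nonneg _ _ (by linarith), ← ENNReal.rpow_mul, ← hexp]
        ring

theorem lintegral_Ioc_hardy {γ p : ℝ} (hp : 1 ≤ p) (hγ : 1 / p < γ + 1) (b : ℝ)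
    {f : ℝ → ℝ≥0∞} (hf : Measurable f) :
    ∫⁻ s in Ioc 0 b,
        (ENNReal.ofReal s ^ (-(γ + 1)) * ∫⁻ σ in Ioc 0 s, ENNReal.ofReal σ ^ γ * f σ) ^ p ≤
      ENNReal.ofReal (γ + 1 - 1 / p)⁻¹ ^ p * ∫⁻ σ in Ioc 0 b, f σ ^ p := by
  set κ := γ + 1 - 1 / p
  have hp0 : 0 < p := one_pos.trans_le hp
  have hκ : 0 < κ := by linarith
  set C := ENNReal.ofReal κ⁻¹
  have hC0 : C ≠ 0 := by simpa [C] using hκ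
  have htail : ∀ σ ∈ Ioc (0 : ℝ) b, ∫⁻ s in Icc σ b, ENNReal.ofReal s ^ (-κ - 1) ≤
      C * ENNReal.ofReal σ ^ (-κ) := fun σ hσ =>
    calc ∫⁻ s in Icc σ b, ENNReal.ofReal s ^ (-κ - 1)
        ≤ ∫⁻ s in Ici σ, ENNReal.ofReal s ^ (-κ - 1) := lintegral_mono_set Icc_subset_Ici_self
      _ = C * ENNReal.ofReal σ ^ (-κ) := by
        rw [← setLIntegral_congr Ioi_ae_eq_Ici, lintegral_Ioi_ofReal_rpow hκ hσ.1]
  calc _ ≤ ∫⁻ s in Ioc 0 b, C ^ (p - 1) * (ENNReal.ofReal s ^ (-κ - 1) *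
          ∫⁻ σ in Ioc 0 s, ENNReal.ofReal σ ^ κ * f σ ^ p) :=
        setLIntegral_mono' measurableSet_Ioc fun s hs =>
          rpow_mul_lintegral_Ioc_le hp hκ (by ring) hs.1 hf.aemeasurable
    _ = C ^ (p - 1) * ∫⁻ σ in Ioc 0 b,
          (ENNReal.ofReal σ ^ κ * f σ ^ p) * ∫⁻ s in Icc σ b, ENNReal.ofReal s ^ (-κ - 1) := by
        rw [lintegral_const_mul' _ _
            (ENNReal.rpow_ne_top_of_nonneg (by linarith) ENNReal.ofReal_ne_top),
          lintegral_Ioc_mul_lintegral_Ioc_comm (by fun_prop) (by fun_prop)]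
    _ ≤ C ^ (p - 1) * ∫⁻ σ in Ioc 0 b,
          (ENNReal.ofReal σ ^ κ * f σ ^ p) * (C * ENNReal.ofReal σ ^ (-κ)) := by
        gcongr _ * ?_
        exact setLIntegral_mono' measurableSet_Ioc fun σ hσ => by gcongr; exact htail σ hσ
    _ = C ^ (p - 1) * ∫⁻ σ in Ioc 0 b, C * f σ ^ p := by
        congr 1
        refine setLIntegral_congr_fun measurableSet_Ioc fun σ hσ => ?_
        have h0 : ENNReal.ofReal σ ≠ 0 := by simpa using hσ.1
        rw [ENNReal.rpow_neg]
        calc _ = ENNReal.ofReal σ ^ κ * (ENNReal.ofReal σ ^ κ)⁻¹ * C * f σ ^ p := by ring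
          _ = C * f σ ^ p := by
            rw [ENNReal.mul_inv_cancel
              (ENNReal.rpow_pos (pos_iff_ne_zero.2 h0) ENNReal.ofReal_ne_top).ne'
              (ENNReal.rpow_ne_top_of_nonneg hκ.le ENNReal.ofReal_ne_top), one_mul]
    _ = C ^ p * ∫⁻ σ in Ioc 0 b, f σ ^ p := by
        have hCp : C ^ (p - 1) * C = C ^ p := by
          conv_rhs => rw [← sub_add_cancel p 1, ENNReal.rpow_add _ _ hC0 ENNReal.ofReal_ne_top,
            ENNReal.rpow_one]
        rw [lintegral_const_mul' _ _ ENNReal.ofReal_ne_top, ← mul_assoc, hCp]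

lemma ofReal_integral_le_lintegral_ofReal {Ω : Type*} [MeasurableSpace Ω] {μ : Measure Ω}
    {g : Ω → ℝ} (hg : 0 ≤ᵐ[μ] g) :
    ENNReal.ofReal (∫ x, g x ∂μ) ≤ ∫⁻ x, ENNReal.ofReal (g x) ∂μ := by
  rw [← Real.enorm_of_nonneg (integral_nonneg_of_ae hg)]
  refine (enorm_integral_le_lintegral_enorm g).trans_eq (lintegral_congr_ae ?_)
  filter_upwards [hg] with x hx using Real.enorm_of_nonneg hx

lemma aemeasurable_ofReal_of_integrableOn_rpow {Ω : Type*} [MeasurableSpace Ω] {μ : Measure Ω}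
    {S : Set Ω} (hS : MeasurableSet S) {g : Ω → ℝ} {p : ℝ} (hp : p ≠ 0)
    (hg : ∀ x ∈ S, 0 ≤ g x) (hint : IntegrableOn (fun x => g x ^ p) S μ) :
    AEMeasurable (fun x => ENNReal.ofReal (g x)) (μ.restrict S) := by
  refine (hint.aemeasurable.pow_const p⁻¹).ennreal_ofReal.congr ?_
  filter_upwards [ae_restrict_mem hS] with x hx
  rw [Real.rpow_rpow_inv (hg x hx) hp]

lemma ofReal_rpow_mul_abs_average_le {α β p s : ℝ} (hp : 0 ≤ p) (hs : 0 < s) (u : ℝ → ℝ) :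
    ENNReal.ofReal ((s ^ β * |s ^ (-(α + 1)) * ∫ σ in (0 : ℝ)..s, σ ^ α * u σ|) ^ p) ≤
      (ENNReal.ofReal s ^ (-(α - β + 1)) *
        ∫⁻ σ in Ioc 0 s, ENNReal.ofReal σ ^ (α - β) * ENNReal.ofReal (σ ^ β * |u σ|)) ^ p := by
  have hweight : s ^ β * |s ^ (-(α + 1))| = s ^ (-(α - β + 1)) := by
    rw [abs_of_pos (Real.rpow_pos_of_pos hs _), ← Real.rpow_add hs]
    ring_nf
  rw [← ENNReal.ofReal_rpow_of_nonneg (by positivity) hp, abs_mul, ← mul_assoc, hweight,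
    ENNReal.ofReal_mul (by positivity), ENNReal.ofReal_rpow_of_pos hs,
    intervalIntegral.integral_of_le hs.le, ← Real.enorm_eq_ofReal_abs]
  gcongr
  refine (enorm_integral_le_lintegral_enorm _).trans_eq
    (setLIntegral_congr_fun measurableSet_Ioc fun σ hσ => ?_)
  rw [Real.enorm_eq_ofReal_abs, ENNReal.ofReal_rpow_of_pos hσ.1,
    ← ENNReal.ofReal_mul (Real.rpow_nonneg hσ.1.le _), abs_mul,
    abs_of_pos (Real.rpow_pos_of_pos hσ.1 _), ← mul_assoc, ← Real.rpow_add hσ.1, sub_add_cancel]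

lemma lintegral_ofReal_rpow_mul_abs_average_le {p α β b : ℝ} (hp : 1 ≤ p)
    (hαβ : β + 1 / p < α + 1) {u : ℝ → ℝ}
    (hu : IntegrableOn (fun s => (s ^ β * |u s|) ^ p) (Ioc 0 b)) :
    ∫⁻ s in Ioc 0 b,
        ENNReal.ofReal ((s ^ β * |s ^ (-(α + 1)) * ∫ σ in (0 : ℝ)..s, σ ^ α * u σ|) ^ p) ≤
      ENNReal.ofReal ((α - β + 1 - 1 / p)⁻¹ ^ p * ∫ s in Ioc 0 b, (s ^ β * |u s|) ^ p) := by
  have hp0 : 0 < p := one_pos.trans_le hp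
  have hC : 0 < (α - β + 1 - 1 / p)⁻¹ := inv_pos.2 (by linarith)
  have hv_nonneg : ∀ σ ∈ Ioc (0 : ℝ) b, 0 ≤ σ ^ β * |u σ| := fun σ hσ =>
    mul_nonneg (Real.rpow_nonneg hσ.1.le β) (abs_nonneg _)
  have hv := aemeasurable_ofReal_of_integrableOn_rpow measurableSet_Ioc hp0.ne' hv_nonneg hu
  have hvp : ∫⁻ σ in Ioc 0 b, hv.mk _ σ ^ p =
      ENNReal.ofReal (∫ s in Ioc 0 b, (s ^ β * |u s|) ^ p) := by
    rw [ofReal_integral_eq_lintegral_ofReal hu (ae_restrict_of_forall_mem measurableSet_Ioc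
      fun σ hσ => Real.rpow_nonneg (hv_nonneg σ hσ) p)]
    refine lintegral_congr_ae ?_
    filter_upwards [hv.ae_eq_mk, ae_restrict_mem measurableSet_Ioc] with σ hσ hσ_mem
    rw [← hσ, ENNReal.ofReal_rpow_of_nonneg (hv_nonneg σ hσ_mem) hp0.le]
  calc _ ≤ ∫⁻ s in Ioc 0 b, (ENNReal.ofReal s ^ (-(α - β + 1)) *
        ∫⁻ σ in Ioc 0 s, ENNReal.ofReal σ ^ (α - β) * hv.mk _ σ) ^ p := by
        refine setLIntegral_mono' measurableSet_Ioc fun s hs =>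
          (ofReal_rpow_mul_abs_average_le hp0.le hs.1 u).trans_eq ?_
        congr 2
        refine lintegral_congr_ae ?_
        filter_upwards [ae_restrict_of_ae_restrict_of_subset (Ioc_subset_Ioc_right hs.2)
          hv.ae_eq_mk] with σ hσ
        rw [hσ]
    _ ≤ _ := lintegral_Ioc_hardy hp (by linarith) b hv.measurable_mk
    _ = _ := by
        rw [hvp, ENNReal.ofReal_mul (Real.rpow_nonneg hC.le _),
          ENNReal.ofReal_rpow_of_nonneg hC.le hp0.le]

theorem stmt_5_general (p α β : ℝ) (hp : 1 ≤ p) (hαβ : β + 1 / p < α + 1)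
    (u : ℝ → ℝ)
    (hu' : IntegrableOn (fun s => (s ^ β * |u s|) ^ p) (Set.Ioc 0 1)) :
    (∫ s in (0:ℝ)..1,
        (s ^ β * |s ^ (-(α + 1)) * ∫ σ in (0:ℝ)..s, σ ^ α * u σ|) ^ p) ^ (1 / p)
      ≤ (α - β + 1 - 1 / p)⁻¹ *
        (∫ s in (0:ℝ)..1, (s ^ β * |u s|) ^ p) ^ (1 / p) := by
  have hp0 : 0 < p := one_pos.trans_le hp
  have hC : 0 < (α - β + 1 - 1 / p)⁻¹ := inv_pos.2 (by linarith)
  have hnonneg : ∀ s : ℝ, 0 ≤ s → ∀ x : ℝ, 0 ≤ (s ^ β * |x|) ^ p := fun s hs x =>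
    Real.rpow_nonneg (mul_nonneg (Real.rpow_nonneg hs β) (abs_nonneg x)) p
  have hR : 0 ≤ ∫ s in (0:ℝ)..1, (s ^ β * |u s|) ^ p :=
    intervalIntegral.integral_nonneg zero_le_one fun s hs => hnonneg s hs.1 _
  have hpow : ∫ s in (0:ℝ)..1, (s ^ β * |s ^ (-(α + 1)) * ∫ σ in (0:ℝ)..s, σ ^ α * u σ|) ^ p ≤
      (α - β + 1 - 1 / p)⁻¹ ^ p * ∫ s in (0:ℝ)..1, (s ^ β * |u s|) ^ p := by
    rw [← ENNReal.ofReal_le_ofReal_iff (mul_nonneg (Real.rpow_nonneg hC.le _) hR),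
      intervalIntegral.integral_of_le zero_le_one, intervalIntegral.integral_of_le zero_le_one]
    exact (ofReal_integral_le_lintegral_ofReal (ae_restrict_of_forall_mem measurableSet_Ioc
      fun s hs => hnonneg s hs.1.le _)).trans (lintegral_ofReal_rpow_mul_abs_average_le hp hαβ hu')
  calc _ ≤ ((α - β + 1 - 1 / p)⁻¹ ^ p * ∫ s in (0:ℝ)..1, (s ^ β * |u s|) ^ p) ^ (1 / p) := by
        gcongr
        exact intervalIntegral.integral_nonneg zero_le_one fun s hs => hnonneg s hs.1 _
    _ = _ := by
        rw [Real.mul_rpow (by positivity) hR, ← Real.rpow_mul hC.le, mul_one_div_cancel hp0.ne',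
          Real.rpow_one]

/-- Weighted Hardy inequality for the averaging operator
`U_α(s) = s^{-(α+1)} ∫₀^s σ^α u(σ) dσ`:
`‖s^β U_α‖_{L^p} ≤ (α - β + 1 - 1/p)⁻¹ ‖s^β u‖_{L^p}` when `α + 1 > β + 1/p`. -/
theorem stmt_5 (p α β : ℝ) (hp : 1 ≤ p) (hαβ : β + 1 / p < α + 1)
    (u : ℝ → ℝ)
    (hu : IntegrableOn (fun s => |u s| ^ p) (Set.Ioc 0 1))
    (hu' : IntegrableOn (fun s => (s ^ β * |u s|) ^ p) (Set.Ioc 0 1)) :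
    (∫ s in (0:ℝ)..1,
        (s ^ β * |s ^ (-(α + 1)) * ∫ σ in (0:ℝ)..s, σ ^ α * u σ|) ^ p) ^ (1 / p)
      ≤ (α - β + 1 - 1 / p)⁻¹ *
        (∫ s in (0:ℝ)..1, (s ^ β * |u s|) ^ p) ^ (1 / p) :=
  stmt_5_general p α β hp hαβ u hu'
end

section
/- Under the same hypotheses (a ≥ 0, h ≥ 0, c + ‖σh‖_{L¹} e^{−‖σ^{1/2}a^{1/2}‖²} ≥ 0, τ solving -τ''+aτ=h, τ(0)=0, τ'(1)=c), for all s ∈ [0,1]: c − (c + ∫₀¹ h)·∫₀¹ σ a(σ)dσ ≤ τ'(s) ≤ c + ∫₀¹ h(σ)dσ. -/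
/-!
The heart of the matter is `τ ≥ 0`. Let `φ` solve `φ'' = a φ`, `φ(0) = 0`, `φ'(0) = 1` (built by
Picard iteration in the cone of nonnegative functions, so `φ(t) ≥ t`). The Wronskian
`φ τ' - φ' τ` vanishes at `0` and has derivative `-φ h`, so it equals `-∫₀ᵗ φ h ≤ 0`; hence `τ / φ`
decreases and it suffices that `τ(1) ≥ 0`. At `t = 1` the Wronskian gives
`φ'(1) τ(1) = φ(1) c + ∫₀¹ φ h`, and a Riccati argument for `t φ' / φ` gives
`φ(σ) ≥ φ(1) σ e^{-∫₀¹ σ a}`, so the hypothesis on `c` makes the right-hand side nonnegative.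

Once `τ ≥ 0`, the function `τ' + ∫₀ˢ h` increases, which gives the upper bound and then
`τ(σ) ≤ σ (c + ∫₀¹ h)`; with this, `τ' + ∫₀ˢ h - (c + ∫₀¹ h) ∫₀ˢ σ a` decreases, which gives the
lower bound.
-/

open MeasureTheory Set

theorem monotoneOn_Icc_of_hasDerivWithinAt {s : Set ℝ} {a b : ℝ} {g g' : ℝ → ℝ}
    (hs : Icc a b ⊆ s) (hg : ∀ x ∈ Icc a b, HasDerivWithinAt g (g' x) s x)
    (hg' : ∀ x ∈ Ioo a b, 0 ≤ g' x) : MonotoneOn g (Icc a b) := by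
  refine monotoneOn_of_hasDerivWithinAt_nonneg (convex_Icc a b)
    (fun x hx => (hg x hx).continuousWithinAt.mono hs) (fun x hx => ?_) (by rwa [interior_Icc])
  rw [interior_Icc] at hx ⊢
  exact (hg x (Ioo_subset_Icc_self hx)).mono (Ioo_subset_Icc_self.trans hs)

theorem antitoneOn_Icc_of_hasDerivWithinAt {s : Set ℝ} {a b : ℝ} {g g' : ℝ → ℝ}
    (hs : Icc a b ⊆ s) (hg : ∀ x ∈ Icc a b, HasDerivWithinAt g (g' x) s x)
    (hg' : ∀ x ∈ Ioo a b, g' x ≤ 0) : AntitoneOn g (Icc a b) := by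
  have := monotoneOn_Icc_of_hasDerivWithinAt hs (fun x hx => (hg x hx).neg)
    (fun x hx => neg_nonneg.2 (hg' x hx))
  exact fun x hx y hy hxy => neg_le_neg_iff.1 (this hx hy hxy)

theorem hasDerivWithinAt_integral_Icc {a b t : ℝ} {g : ℝ → ℝ} (hg : ContinuousOn g (Icc a b))
    (ht : t ∈ Icc a b) :
    HasDerivWithinAt (fun u => ∫ x in a..u, g x) (g t) (Icc a b) t := by
  have : Fact (t ∈ Icc a b) := ⟨ht⟩
  refine intervalIntegral.integral_hasDerivWithinAt_right ?_
    (hg.stronglyMeasurableAtFilter_nhdsWithin measurableSet_Icc t) (hg t ht)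
  refine (hg.mono ?_).intervalIntegrable
  rw [uIcc_of_le ht.1]
  exact Icc_subset_Icc_right ht.2

theorem hasDerivWithinAt_integral_sub_mul {a b t : ℝ} {g : ℝ → ℝ} (hg : ContinuousOn g (Icc a b))
    (ht : t ∈ Icc a b) :
    HasDerivWithinAt (fun u => ∫ s in a..u, (u - s) * g s) (∫ s in a..t, g s) (Icc a b) t := by
  have hint : ∀ u ∈ Icc a b, ∀ k : ℝ → ℝ, ContinuousOn k (Icc a b) →
      IntervalIntegrable (fun s => k s * g s) volume a u := fun u hu k hk => by
    refine ((hk.mul hg).mono ?_).intervalIntegrable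
    rw [uIcc_of_le hu.1]
    exact Icc_subset_Icc_right hu.2
  have hsplit : ∀ u ∈ Icc a b,
      ∫ s in a..u, (u - s) * g s = u * (∫ s in a..u, g s) - ∫ s in a..u, s * g s := by
    intro u hu
    rw [← intervalIntegral.integral_const_mul, ← intervalIntegral.integral_sub]
    · exact intervalIntegral.integral_congr fun s _ => by ring
    · exact hint u hu (fun _ => u) continuousOn_const
    · exact hint u hu _ continuousOn_id
  refine HasDerivWithinAt.congr_of_mem ?_ hsplit ht
  exact (((hasDerivWithinAt_id t (Icc a b)).fun_mul (hasDerivWithinAt_integral_Icc hg ht)).fun_sub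
    (hasDerivWithinAt_integral_Icc (continuousOn_id.mul hg) ht)).congr_deriv (by simp)

structure IsTensionSolution (a h τ τ' : ℝ → ℝ) : Prop where
  apply_zero : τ 0 = 0
  hasDerivWithinAt : ∀ s ∈ Icc (0:ℝ) 1, HasDerivWithinAt τ (τ' s) (Icc 0 1) s
  hasDerivWithinAt_deriv : ∀ s ∈ Icc (0:ℝ) 1, HasDerivWithinAt τ' (a s * τ s - h s) (Icc 0 1) s

noncomputable section Picard

variable {f : ℝ → ℝ}

/-- Integral form of `φ'' = f φ`, `φ(0) = 0`, `φ'(0) = 1`. -/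
def homogeneousVolterra (f q : ℝ → ℝ) (t : ℝ) : ℝ := t + ∫ s in (0:ℝ)..t, (t - s) * (f s * q s)

theorem hasDerivWithinAt_homogeneousVolterra {q : ℝ → ℝ} {t : ℝ}
    (hfq : ContinuousOn (fun s => f s * q s) (Icc 0 1)) (ht : t ∈ Icc (0:ℝ) 1) :
    HasDerivWithinAt (homogeneousVolterra f q) (1 + ∫ s in (0:ℝ)..t, f s * q s) (Icc 0 1) t :=
  (hasDerivWithinAt_id t _).add (hasDerivWithinAt_integral_sub_mul hfq ht)

theorem continuousOn_mul_IccExtend (hf : ContinuousOn f (Icc 0 1)) (q : C(Icc (0:ℝ) 1, ℝ)) :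
    ContinuousOn (fun s => f s * IccExtend zero_le_one q s) (Icc 0 1) :=
  hf.mul (continuous_IccExtend_iff.2 q.continuous).continuousOn

def picardMap (hf : ContinuousOn f (Icc 0 1)) (q : C(Icc (0:ℝ) 1, ℝ)) : C(Icc (0:ℝ) 1, ℝ) where
  toFun := (Icc 0 1).domRestrict (homogeneousVolterra f (IccExtend zero_le_one q))
  continuous_toFun := ContinuousOn.domRestrict fun _ ht =>
    (hasDerivWithinAt_homogeneousVolterra (continuousOn_mul_IccExtend hf q) ht).continuousWithinAt

theorem picardMap_apply (hf : ContinuousOn f (Icc 0 1)) (q : C(Icc (0:ℝ) 1, ℝ))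
    (t : Icc (0:ℝ) 1) : picardMap hf q t = homogeneousVolterra f (IccExtend zero_le_one q) t := rfl

theorem abs_picardMap_sub_le (hf : ContinuousOn f (Icc 0 1)) {K : ℝ}
    (hK : ∀ s ∈ Icc (0:ℝ) 1, |f s| ≤ K) (q r : C(Icc (0:ℝ) 1, ℝ)) (t : Icc (0:ℝ) 1) :
    |picardMap hf q t - picardMap hf r t| ≤
      K * ∫ s in (0:ℝ)..t, |IccExtend zero_le_one q s - IccExtend zero_le_one r s| := by
  obtain ⟨t, ht0, ht1⟩ := t
  set q' := IccExtend zero_le_one q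
  set r' := IccExtend zero_le_one r
  have hsub : uIcc 0 t ⊆ Icc (0:ℝ) 1 := by rw [uIcc_of_le ht0]; exact Icc_subset_Icc_right ht1
  have hq := continuousOn_mul_IccExtend hf q
  have hr := continuousOn_mul_IccExtend hf r
  have hdiff : ContinuousOn (fun s => q' s - r' s) (Icc 0 1) :=
    ((continuous_IccExtend_iff.2 q.continuous).sub
      (continuous_IccExtend_iff.2 r.continuous)).continuousOn
  have hint : ∀ k : ℝ → ℝ, ContinuousOn k (Icc 0 1) →
      IntervalIntegrable (fun s => (t - s) * k s) volume 0 t := fun k hk =>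
    ((continuousOn_const.sub continuousOn_id).mul (hk.mono hsub)).intervalIntegrable
  have heq : picardMap hf q ⟨t, ht0, ht1⟩ - picardMap hf r ⟨t, ht0, ht1⟩ =
      ∫ s in (0:ℝ)..t, (t - s) * (f s * (q' s - r' s)) := by
    simp only [picardMap_apply, homogeneousVolterra, add_sub_add_left_eq_sub]
    rw [← intervalIntegral.integral_sub (hint _ hq) (hint _ hr)]
    exact intervalIntegral.integral_congr fun s _ => by ring
  rw [heq, ← intervalIntegral.integral_const_mul]
  refine (intervalIntegral.abs_integral_le_integral_abs ht0).trans
    (intervalIntegral.integral_mono_on ht0 ?_ ?_ fun s hs => ?_)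
  · exact (hint _ (hf.mul hdiff)).abs
  · exact (continuousOn_const.mul (hdiff.mono hsub).abs).intervalIntegrable
  · have hs1 : s ∈ Icc (0:ℝ) 1 := ⟨hs.1, hs.2.trans ht1⟩
    rw [abs_mul, abs_mul, abs_of_nonneg (sub_nonneg.2 hs.2), ← one_mul (K * _)]
    exact mul_le_mul (by linarith [hs.1]) (mul_le_mul_of_nonneg_right (hK s hs1) (abs_nonneg _))
      (by positivity) zero_le_one

theorem abs_iterate_picardMap_sub_le (hf : ContinuousOn f (Icc 0 1)) {K : ℝ}
    (hK : ∀ s ∈ Icc (0:ℝ) 1, |f s| ≤ K) (n : ℕ) (q r : C(Icc (0:ℝ) 1, ℝ)) (t : Icc (0:ℝ) 1) :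
    |(picardMap hf)^[n] q t - (picardMap hf)^[n] r t| ≤ K ^ n * t ^ n / n.factorial * dist q r := by
  induction n generalizing t with
  | zero => simpa [← Real.dist_eq] using ContinuousMap.dist_apply_le_dist t
  | succ n ih =>
    obtain ⟨t, ht0, ht1⟩ := t
    have hK0 : 0 ≤ K := (abs_nonneg _).trans (hK 0 ⟨le_rfl, zero_le_one⟩)
    rw [Function.iterate_succ_apply', Function.iterate_succ_apply']
    refine (abs_picardMap_sub_le hf hK _ _ _).trans ?_
    have hmono : ∫ s in (0:ℝ)..t, |IccExtend zero_le_one ((picardMap hf)^[n] q) s -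
        IccExtend zero_le_one ((picardMap hf)^[n] r) s| ≤
        ∫ s in (0:ℝ)..t, K ^ n / n.factorial * dist q r * s ^ n := by
      refine intervalIntegral.integral_mono_on ht0 ?_
        ((by fun_prop : Continuous _).intervalIntegrable _ _) fun s hs => ?_
      · exact (((continuous_IccExtend_iff.2 (ContinuousMap.continuous _)).sub
          (continuous_IccExtend_iff.2 (ContinuousMap.continuous _))).abs).intervalIntegrable _ _
      · have hs1 : s ∈ Icc (0:ℝ) 1 := ⟨hs.1, hs.2.trans ht1⟩
        rw [IccExtend_of_mem _ _ hs1, IccExtend_of_mem _ _ hs1]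
        exact (ih ⟨s, hs1⟩).trans_eq (by ring)
    rw [intervalIntegral.integral_const_mul, integral_pow] at hmono
    calc K * _ ≤ K * (K ^ n / n.factorial * dist q r * ((t ^ (n + 1) - 0 ^ (n + 1)) / (n + 1))) :=
          mul_le_mul_of_nonneg_left hmono hK0
      _ = K ^ (n + 1) * t ^ (n + 1) / (n + 1).factorial * dist q r := by
          rw [Nat.factorial_succ]; push_cast; field_simp; ring

theorem exists_contractingWith_iterate_picardMap (hf : ContinuousOn f (Icc 0 1)) :
    ∃ (n : ℕ) (κ : NNReal), ContractingWith κ (picardMap hf)^[n] := by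
  obtain ⟨K, hK⟩ := isCompact_Icc.exists_bound_of_continuousOn hf
  simp only [Real.norm_eq_abs] at hK
  have hK0 : 0 ≤ K := (abs_nonneg _).trans (hK 0 ⟨le_rfl, zero_le_one⟩)
  obtain ⟨n, hn⟩ := (FloorSemiring.tendsto_pow_div_factorial_atTop K).eventually
    (gt_mem_nhds zero_lt_one) |>.exists
  have hκ0 : 0 ≤ K ^ n / n.factorial := by positivity
  refine ⟨n, (K ^ n / n.factorial).toNNReal, Real.toNNReal_lt_one.2 hn,
    LipschitzWith.of_dist_le_mul fun q r => ?_⟩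
  rw [Real.coe_toNNReal _ hκ0]
  refine (ContinuousMap.dist_le (by positivity)).2 fun t => ?_
  rw [Real.dist_eq]
  refine (abs_iterate_picardMap_sub_le hf hK n q r t).trans ?_
  have ht : (t : ℝ) ^ n ≤ 1 := pow_le_one₀ t.2.1 t.2.2
  have : K ^ n * (t : ℝ) ^ n ≤ K ^ n := mul_le_of_le_one_right (by positivity) ht
  gcongr

theorem exists_isFixedPt_picardMap_nonneg (hf : ContinuousOn f (Icc 0 1))
    (hf0 : ∀ s ∈ Icc (0:ℝ) 1, 0 ≤ f s) :
    ∃ W, Function.IsFixedPt (picardMap hf) W ∧ ∀ t, 0 ≤ W t := by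
  obtain ⟨n, κ, hκ⟩ := exists_contractingWith_iterate_picardMap hf
  set S : Set C(Icc (0:ℝ) 1, ℝ) := {q | ∀ t, 0 ≤ q t}
  have hS : IsClosed S := by
    simp only [S, ofPred_forall]
    exact isClosed_iInter fun t => isClosed_le continuous_const (continuous_eval_const t)
  have hmaps : MapsTo (picardMap hf) S S := fun q hq t => by
    obtain ⟨t, ht0, ht1⟩ := t
    refine add_nonneg ht0 (intervalIntegral.integral_nonneg ht0 fun s hs => ?_)
    exact mul_nonneg (sub_nonneg.2 hs.2) (mul_nonneg (hf0 s ⟨hs.1, hs.2.trans ht1⟩) (hq _))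
  refine ⟨_, hκ.isFixedPt_fixedPoint_iterate, hS.mem_of_tendsto (hκ.tendsto_iterate_fixedPoint 0)
    (Filter.Eventually.of_forall fun k => (hmaps.iterate n).iterate k fun _ => le_rfl)⟩

theorem exists_isTensionSolution_zero (hf : ContinuousOn f (Icc 0 1))
    (hf0 : ∀ s ∈ Icc (0:ℝ) 1, 0 ≤ f s) :
    ∃ φ φ', IsTensionSolution f 0 φ φ' ∧ φ' 0 = 1 ∧ ∀ t ∈ Icc (0:ℝ) 1, 0 ≤ φ t := by
  obtain ⟨W, hW, hW0⟩ := exists_isFixedPt_picardMap_nonneg hf hf0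
  set q := IccExtend zero_le_one W
  have hfq := continuousOn_mul_IccExtend hf W
  have hq : ∀ t ∈ Icc (0:ℝ) 1, q t = homogeneousVolterra f q t := fun t ht => by
    show IccExtend zero_le_one W t = _
    rw [IccExtend_of_mem _ _ ht, ← hW]; rfl
  refine ⟨homogeneousVolterra f q, fun t => 1 + ∫ s in (0:ℝ)..t, f s * q s,
    ⟨by simp [homogeneousVolterra], fun t ht => hasDerivWithinAt_homogeneousVolterra hfq ht,
      fun t ht => ?_⟩, by simp, fun t ht => hq t ht ▸ hW0 _⟩
  rw [Pi.zero_apply, sub_zero, ← hq t ht]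
  exact (hasDerivWithinAt_integral_Icc hfq ht).const_add 1

end Picard

namespace IsTensionSolution

variable {a h τ τ' f φ φ' : ℝ → ℝ}

theorem continuousOn (hτ : IsTensionSolution a h τ τ') : ContinuousOn τ (Icc 0 1) :=
  fun s hs => (hτ.hasDerivWithinAt s hs).continuousWithinAt

theorem one_le_deriv (hf0 : ∀ s ∈ Icc (0:ℝ) 1, 0 ≤ f s) (hφ : IsTensionSolution f 0 φ φ')
    (hφ1 : φ' 0 = 1) (hφ0 : ∀ t ∈ Icc (0:ℝ) 1, 0 ≤ φ t) : ∀ t ∈ Icc (0:ℝ) 1, 1 ≤ φ' t := by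
  intro t ht
  refine hφ1 ▸ monotoneOn_Icc_of_hasDerivWithinAt subset_rfl hφ.hasDerivWithinAt_deriv
    (fun x hx => ?_) (left_mem_Icc.2 zero_le_one) ht ht.1
  have hx := Ioo_subset_Icc_self hx
  simpa using mul_nonneg (hf0 x hx) (hφ0 x hx)

theorem le_apply (hf0 : ∀ s ∈ Icc (0:ℝ) 1, 0 ≤ f s) (hφ : IsTensionSolution f 0 φ φ')
    (hφ1 : φ' 0 = 1) (hφ0 : ∀ t ∈ Icc (0:ℝ) 1, 0 ≤ φ t) : ∀ t ∈ Icc (0:ℝ) 1, t ≤ φ t := by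
  intro t ht
  have hmono := monotoneOn_Icc_of_hasDerivWithinAt subset_rfl
    (fun x hx => (hφ.hasDerivWithinAt x hx).sub (hasDerivWithinAt_id x _))
    (fun x hx => sub_nonneg.2 (hφ.one_le_deriv hf0 hφ1 hφ0 x (Ioo_subset_Icc_self hx)))
    (left_mem_Icc.2 zero_le_one) ht ht.1
  simpa [hφ.apply_zero] using hmono

theorem apply_le_mul_deriv (hf0 : ∀ s ∈ Icc (0:ℝ) 1, 0 ≤ f s) (hφ : IsTensionSolution f 0 φ φ')
    (hφ0 : ∀ t ∈ Icc (0:ℝ) 1, 0 ≤ φ t) : ∀ t ∈ Icc (0:ℝ) 1, φ t ≤ t * φ' t := by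
  intro t ht
  have hmono := monotoneOn_Icc_of_hasDerivWithinAt subset_rfl
    (fun x hx => ((hasDerivWithinAt_id x _).fun_mul (hφ.hasDerivWithinAt_deriv x hx)).fun_sub
      (hφ.hasDerivWithinAt x hx))
    (fun x hx => ?_) (left_mem_Icc.2 zero_le_one) ht ht.1
  · simpa [hφ.apply_zero] using hmono
  · have hx' := Ioo_subset_Icc_self hx
    have := mul_nonneg hx.1.le (mul_nonneg (hf0 x hx') (hφ0 x hx'))
    simp only [id, Pi.zero_apply, sub_zero]
    linarith

theorem mul_deriv_le (hf : ContinuousOn f (Icc 0 1)) (hf0 : ∀ s ∈ Icc (0:ℝ) 1, 0 ≤ f s)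
    (hφ : IsTensionSolution f 0 φ φ') (hφ1 : φ' 0 = 1) (hφ0 : ∀ t ∈ Icc (0:ℝ) 1, 0 ≤ φ t) :
    ∀ t ∈ Icc (0:ℝ) 1, t * φ' t ≤ (1 + ∫ s in (0:ℝ)..t, s * f s) * φ t := by
  intro t ht
  have hA := continuousOn_id.mul hf
  have hmono := monotoneOn_Icc_of_hasDerivWithinAt subset_rfl
    (fun x hx => (((hasDerivWithinAt_integral_Icc hA hx).const_add 1).fun_mul
      (hφ.hasDerivWithinAt x hx)).fun_sub
      ((hasDerivWithinAt_id x _).fun_mul (hφ.hasDerivWithinAt_deriv x hx)))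
    (fun x hx => ?_) (left_mem_Icc.2 zero_le_one) ht ht.1
  · simpa [hφ.apply_zero] using hmono
  · have hx' := Ioo_subset_Icc_self hx
    have hAx : 0 ≤ ∫ s in (0:ℝ)..x, s * f s := intervalIntegral.integral_nonneg hx.1.le
      fun s hs => mul_nonneg hs.1 (hf0 s ⟨hs.1, hs.2.trans hx'.2⟩)
    have := mul_nonneg hAx (zero_le_one.trans (hφ.one_le_deriv hf0 hφ1 hφ0 x hx'))
    simp only [id, Pi.mul_apply, Pi.zero_apply, sub_zero]
    linarith

-- The Riccati quantity `q = t φ' / φ` satisfies `q' = t f - q (q - 1) / t`; this makes the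
-- derivative of the function below equal to `-(q - 1)² / t`.
theorem antitoneOn_riccati (hf : ContinuousOn f (Icc 0 1)) (hf0 : ∀ s ∈ Icc (0:ℝ) 1, 0 ≤ f s)
    (hφ : IsTensionSolution f 0 φ φ') (hφ1 : φ' 0 = 1) (hφ0 : ∀ t ∈ Icc (0:ℝ) 1, 0 ≤ φ t)
    {σ : ℝ} (hσ0 : 0 < σ) :
    AntitoneOn (fun t => (t * φ' t - φ t) / φ t + Real.log (φ t) - Real.log t -
      ∫ s in (0:ℝ)..t, s * f s) (Icc σ 1) := by
  have hsub : Icc σ 1 ⊆ Icc (0:ℝ) 1 := Icc_subset_Icc_left hσ0.le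
  refine antitoneOn_Icc_of_hasDerivWithinAt hsub
    (g' := fun t => -((t * φ' t - φ t) / φ t) ^ 2 / t) (fun t ht => ?_) fun t ht => ?_
  · have ht0 : 0 < t := hσ0.trans_le ht.1
    have hφt : 0 < φ t := ht0.trans_le (hφ.le_apply hf0 hφ1 hφ0 t (hsub ht))
    have hφ' := hφ.hasDerivWithinAt t (hsub ht)
    have hv := ((hasDerivWithinAt_id t _).fun_mul (hφ.hasDerivWithinAt_deriv t (hsub ht))).fun_sub
      hφ'
    refine (((hv.div hφ' hφt.ne').add (hφ'.log hφt.ne')).sub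
      ((Real.hasDerivAt_log ht0.ne').hasDerivWithinAt)).sub
      (hasDerivWithinAt_integral_Icc (continuousOn_id.mul hf) (hsub ht)) |>.congr_deriv ?_
    simp only [id, Pi.mul_apply, Pi.zero_apply, sub_zero]
    field_simp
    ring
  · have := hσ0.trans ht.1
    rw [neg_div]
    exact neg_nonpos.2 (by positivity)

theorem mul_exp_neg_le (hf : ContinuousOn f (Icc 0 1)) (hf0 : ∀ s ∈ Icc (0:ℝ) 1, 0 ≤ f s)
    (hφ : IsTensionSolution f 0 φ φ') (hφ1 : φ' 0 = 1) (hφ0 : ∀ t ∈ Icc (0:ℝ) 1, 0 ≤ φ t) :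
    ∀ σ ∈ Icc (0:ℝ) 1, φ 1 * σ * Real.exp (-∫ s in (0:ℝ)..1, s * f s) ≤ φ σ := by
  intro σ hσ
  rcases hσ.1.eq_or_lt with rfl | hσ0
  · simp [hφ.apply_zero]
  have h1 := right_mem_Icc.2 (zero_le_one' ℝ)
  have hφ1pos := zero_lt_one.trans_le (hφ.le_apply hf0 hφ1 hφ0 1 h1)
  have hφσpos := hσ0.trans_le (hφ.le_apply hf0 hφ1 hφ0 σ hσ)
  have hR := hφ.antitoneOn_riccati hf hf0 hφ1 hφ0 hσ0 (left_mem_Icc.2 hσ.2)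
    (right_mem_Icc.2 hσ.2) hσ.2
  have hq1 : 0 ≤ (1 * φ' 1 - φ 1) / φ 1 :=
    div_nonneg (by simpa using hφ.apply_le_mul_deriv hf0 hφ0 1 h1) hφ1pos.le
  have hqσ : (σ * φ' σ - φ σ) / φ σ ≤ ∫ s in (0:ℝ)..σ, s * f s := by
    rw [div_le_iff₀ hφσpos]
    linarith [hφ.mul_deriv_le hf hf0 hφ1 hφ0 σ hσ]
  have hlog : Real.log (φ 1) - ∫ s in (0:ℝ)..1, s * f s ≤ Real.log (φ σ / σ) := by
    simp only [Real.log_one] at hR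
    rw [Real.log_div hφσpos.ne' hσ0.ne']
    linarith
  have := Real.exp_le_exp.2 hlog
  rw [Real.exp_sub, Real.exp_log hφ1pos, Real.exp_log (div_pos hφσpos hσ0), le_div_iff₀ hσ0,
    div_mul_eq_mul_div, div_le_iff₀ (Real.exp_pos _)] at this
  rw [Real.exp_neg]
  field_simp
  linarith

theorem wronskian_eq (hh : ContinuousOn h (Icc 0 1)) (hτ : IsTensionSolution a h τ τ')
    (hφ : IsTensionSolution a 0 φ φ') :
    ∀ t ∈ Icc (0:ℝ) 1, φ t * τ' t - φ' t * τ t = -∫ s in (0:ℝ)..t, φ s * h s := by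
  intro t ht
  have hω : ∀ x ∈ Icc (0:ℝ) 1, HasDerivWithinAt
      (fun x => φ x * τ' x - φ' x * τ x + ∫ s in (0:ℝ)..x, φ s * h s) 0 (Icc 0 1) x := by
    intro x hx
    refine (((hφ.hasDerivWithinAt x hx).fun_mul (hτ.hasDerivWithinAt_deriv x hx)).fun_sub
      ((hφ.hasDerivWithinAt_deriv x hx).fun_mul (hτ.hasDerivWithinAt x hx))).fun_add
      (hasDerivWithinAt_integral_Icc (hφ.continuousOn.mul hh) hx) |>.congr_deriv ?_
    simp only [Pi.zero_apply, Pi.mul_apply]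
    ring
  have h0 := left_mem_Icc.2 (zero_le_one' ℝ)
  have hmono := monotoneOn_Icc_of_hasDerivWithinAt subset_rfl hω (fun _ _ => le_rfl) h0 ht ht.1
  have hanti := antitoneOn_Icc_of_hasDerivWithinAt subset_rfl hω (fun _ _ => le_rfl) h0 ht ht.1
  simp only [hφ.apply_zero, hτ.apply_zero, mul_zero, sub_zero,
    intervalIntegral.integral_same] at hmono hanti
  linarith

theorem apply_one_nonneg (ha : ContinuousOn a (Icc 0 1)) (ha0 : ∀ s ∈ Icc (0:ℝ) 1, 0 ≤ a s)
    (hh : ContinuousOn h (Icc 0 1)) (hh0 : ∀ s ∈ Icc (0:ℝ) 1, 0 ≤ h s)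
    (hτ : IsTensionSolution a h τ τ')
    (hc : 0 ≤ τ' 1 + (∫ σ in (0:ℝ)..1, σ * h σ) * Real.exp (-∫ σ in (0:ℝ)..1, σ * a σ))
    (hφ : IsTensionSolution a 0 φ φ') (hφ1 : φ' 0 = 1) (hφ0 : ∀ t ∈ Icc (0:ℝ) 1, 0 ≤ φ t) :
    0 ≤ τ 1 := by
  have h1 := right_mem_Icc.2 (zero_le_one' ℝ)
  have hφh : φ 1 * Real.exp (-∫ σ in (0:ℝ)..1, σ * a σ) * ∫ σ in (0:ℝ)..1, σ * h σ ≤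
      ∫ σ in (0:ℝ)..1, φ σ * h σ := by
    rw [← intervalIntegral.integral_const_mul]
    refine intervalIntegral.integral_mono_on zero_le_one ?_ ?_ fun σ hσ => ?_
    · exact (continuousOn_const.mul (continuousOn_id.mul hh)).intervalIntegrable_of_Icc
        zero_le_one
    · exact (hφ.continuousOn.mul hh).intervalIntegrable_of_Icc zero_le_one
    · have := mul_le_mul_of_nonneg_right (hφ.mul_exp_neg_le ha ha0 hφ1 hφ0 σ hσ) (hh0 σ hσ)
      linarith
  have hw := hτ.wronskian_eq hh hφ 1 h1
  have hφ'1 := zero_lt_one.trans_le (hφ.one_le_deriv ha0 hφ1 hφ0 1 h1)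
  have hφ1pos := zero_lt_one.trans_le (hφ.le_apply ha0 hφ1 hφ0 1 h1)
  refine nonneg_of_mul_nonneg_right (a := φ' 1) ?_ hφ'1
  nlinarith [mul_nonneg hφ1pos.le hc]

theorem nonneg_of_apply_one_nonneg (ha0 : ∀ s ∈ Icc (0:ℝ) 1, 0 ≤ a s)
    (hh : ContinuousOn h (Icc 0 1)) (hh0 : ∀ s ∈ Icc (0:ℝ) 1, 0 ≤ h s)
    (hτ : IsTensionSolution a h τ τ') (hφ : IsTensionSolution a 0 φ φ') (hφ1 : φ' 0 = 1)
    (hφ0 : ∀ t ∈ Icc (0:ℝ) 1, 0 ≤ φ t) (hτ1 : 0 ≤ τ 1) : ∀ t ∈ Icc (0:ℝ) 1, 0 ≤ τ t := by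
  intro t ht
  rcases ht.1.eq_or_lt with rfl | ht0
  · exact hτ.apply_zero.ge
  have hsub : Icc t 1 ⊆ Icc (0:ℝ) 1 := Icc_subset_Icc_left ht0.le
  have hφpos : ∀ x ∈ Icc t 1, 0 < φ x := fun x hx =>
    (ht0.trans_le hx.1).trans_le (hφ.le_apply ha0 hφ1 hφ0 x (hsub hx))
  have hanti : AntitoneOn (fun x => τ x / φ x) (Icc t 1) := by
    refine antitoneOn_Icc_of_hasDerivWithinAt hsub (fun x hx =>
      (hτ.hasDerivWithinAt x (hsub hx)).div (hφ.hasDerivWithinAt x (hsub hx)) (hφpos x hx).ne')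
      fun x hx => div_nonpos_of_nonpos_of_nonneg ?_ (sq_nonneg _)
    have hx := hsub (Ioo_subset_Icc_self hx)
    have hw := hτ.wronskian_eq hh hφ x hx
    have : 0 ≤ ∫ s in (0:ℝ)..x, φ s * h s := intervalIntegral.integral_nonneg hx.1
      fun s hs => mul_nonneg (hφ0 s ⟨hs.1, hs.2.trans hx.2⟩) (hh0 s ⟨hs.1, hs.2.trans hx.2⟩)
    linarith
  have hq := hanti (left_mem_Icc.2 ht.2) (right_mem_Icc.2 ht.2) ht.2
  have hφt := hφpos t (left_mem_Icc.2 ht.2)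
  have := div_nonneg hτ1 (hφpos 1 (right_mem_Icc.2 ht.2)).le
  simpa [le_div_iff₀ hφt] using this.trans hq

theorem nonneg (ha : ContinuousOn a (Icc 0 1)) (ha0 : ∀ s ∈ Icc (0:ℝ) 1, 0 ≤ a s)
    (hh : ContinuousOn h (Icc 0 1)) (hh0 : ∀ s ∈ Icc (0:ℝ) 1, 0 ≤ h s)
    (hτ : IsTensionSolution a h τ τ')
    (hc : 0 ≤ τ' 1 + (∫ σ in (0:ℝ)..1, σ * h σ) * Real.exp (-∫ σ in (0:ℝ)..1, σ * a σ)) :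
    ∀ t ∈ Icc (0:ℝ) 1, 0 ≤ τ t := by
  obtain ⟨φ, φ', hφ, hφ1, hφ0⟩ := exists_isTensionSolution_zero ha ha0
  exact hτ.nonneg_of_apply_one_nonneg ha0 hh hh0 hφ hφ1 hφ0
    (hτ.apply_one_nonneg ha ha0 hh hh0 hc hφ hφ1 hφ0)

theorem deriv_le (ha0 : ∀ s ∈ Icc (0:ℝ) 1, 0 ≤ a s) (hh : ContinuousOn h (Icc 0 1))
    (hh0 : ∀ s ∈ Icc (0:ℝ) 1, 0 ≤ h s) (hτ : IsTensionSolution a h τ τ')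
    (hτ0 : ∀ t ∈ Icc (0:ℝ) 1, 0 ≤ τ t) :
    ∀ s ∈ Icc (0:ℝ) 1, τ' s ≤ τ' 1 + ∫ σ in (0:ℝ)..1, h σ := by
  intro s hs
  have hmono := monotoneOn_Icc_of_hasDerivWithinAt subset_rfl
    (fun x hx => (hτ.hasDerivWithinAt_deriv x hx).add (hasDerivWithinAt_integral_Icc hh hx))
    (fun x hx => by
      have hx := Ioo_subset_Icc_self hx
      simpa using mul_nonneg (ha0 x hx) (hτ0 x hx))
    hs (right_mem_Icc.2 zero_le_one) hs.2
  have : 0 ≤ ∫ σ in (0:ℝ)..s, h σ :=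
    intervalIntegral.integral_nonneg hs.1 fun σ hσ => hh0 σ ⟨hσ.1, hσ.2.trans hs.2⟩
  simp only [Pi.add_apply] at hmono
  linarith

theorem apply_le_mul (ha0 : ∀ s ∈ Icc (0:ℝ) 1, 0 ≤ a s) (hh : ContinuousOn h (Icc 0 1))
    (hh0 : ∀ s ∈ Icc (0:ℝ) 1, 0 ≤ h s) (hτ : IsTensionSolution a h τ τ')
    (hτ0 : ∀ t ∈ Icc (0:ℝ) 1, 0 ≤ τ t) :
    ∀ s ∈ Icc (0:ℝ) 1, τ s ≤ s * (τ' 1 + ∫ σ in (0:ℝ)..1, h σ) := by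
  intro s hs
  have hmono := monotoneOn_Icc_of_hasDerivWithinAt subset_rfl
    (fun x hx => ((hasDerivWithinAt_id x _).mul_const (τ' 1 + ∫ σ in (0:ℝ)..1, h σ)).sub
      (hτ.hasDerivWithinAt x hx))
    (fun x hx => by
      simpa using hτ.deriv_le ha0 hh hh0 hτ0 x (Ioo_subset_Icc_self hx))
    (left_mem_Icc.2 zero_le_one) hs hs.1
  simpa [hτ.apply_zero] using hmono

theorem le_deriv (ha : ContinuousOn a (Icc 0 1)) (ha0 : ∀ s ∈ Icc (0:ℝ) 1, 0 ≤ a s)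
    (hh : ContinuousOn h (Icc 0 1)) (hh0 : ∀ s ∈ Icc (0:ℝ) 1, 0 ≤ h s)
    (hτ : IsTensionSolution a h τ τ') (hτ0 : ∀ t ∈ Icc (0:ℝ) 1, 0 ≤ τ t) :
    ∀ s ∈ Icc (0:ℝ) 1, τ' 1 - (τ' 1 + ∫ σ in (0:ℝ)..1, h σ) * ∫ σ in (0:ℝ)..1, σ * a σ ≤ τ' s := by
  intro s hs
  set M := τ' 1 + ∫ σ in (0:ℝ)..1, h σ
  have h1 := right_mem_Icc.2 (zero_le_one' ℝ)
  have hM : 0 ≤ M := by simpa using (hτ0 1 h1).trans (hτ.apply_le_mul ha0 hh hh0 hτ0 1 h1)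
  have hanti := antitoneOn_Icc_of_hasDerivWithinAt subset_rfl
    (fun x hx => ((hτ.hasDerivWithinAt_deriv x hx).add (hasDerivWithinAt_integral_Icc hh hx)).sub
      ((hasDerivWithinAt_integral_Icc (continuousOn_id.mul ha) hx).const_mul M))
    (fun x hx => by
      have hx := Ioo_subset_Icc_self hx
      have := mul_le_mul_of_nonneg_left (hτ.apply_le_mul ha0 hh hh0 hτ0 x hx) (ha0 x hx)
      simp only [Pi.mul_apply, id]
      linarith)
    hs h1 hs.2
  have hA : 0 ≤ ∫ σ in (0:ℝ)..s, σ * a σ := intervalIntegral.integral_nonneg hs.1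
    fun σ hσ => mul_nonneg hσ.1 (ha0 σ ⟨hσ.1, hσ.2.trans hs.2⟩)
  have hH : ∫ σ in (0:ℝ)..s, h σ ≤ ∫ σ in (0:ℝ)..1, h σ :=
    intervalIntegral.integral_mono_interval le_rfl hs.1 hs.2
      (ae_restrict_of_forall_mem measurableSet_Ioc fun σ hσ => hh0 σ (Ioc_subset_Icc_self hσ))
      (hh.intervalIntegrable_of_Icc zero_le_one)
  simp only [Pi.add_apply, Pi.sub_apply, Pi.mul_apply, id_eq] at hanti
  nlinarith [mul_nonneg hM hA]

end IsTensionSolution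

/-- Two-sided bound for the derivative of the solution of the tension BVP
`-τ'' + a τ = h`, `τ(0)=0`, `τ'(1)=c` with nonnegative data:
`c - (c + ∫₀¹ h) ∫₀¹ σ a ≤ τ'(s) ≤ c + ∫₀¹ h`. -/
theorem stmt_12 (a h : ℝ → ℝ) (c : ℝ)
    (ha_cont : ContinuousOn a (Set.Icc 0 1))
    (ha_nonneg : ∀ s ∈ Set.Icc (0:ℝ) 1, 0 ≤ a s)
    (hh_cont : ContinuousOn h (Set.Icc 0 1))
    (hh_nonneg : ∀ s ∈ Set.Icc (0:ℝ) 1, 0 ≤ h s)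
    (hc : 0 ≤ c + (∫ σ in (0:ℝ)..1, σ * h σ) * Real.exp (-∫ σ in (0:ℝ)..1, σ * a σ))
    (τ τ' : ℝ → ℝ)
    (hτ : ∀ s ∈ Set.Icc (0:ℝ) 1, HasDerivWithinAt τ (τ' s) (Set.Icc 0 1) s)
    (hτ' : ∀ s ∈ Set.Icc (0:ℝ) 1, HasDerivWithinAt τ' (a s * τ s - h s) (Set.Icc 0 1) s)
    (hτ0 : τ 0 = 0) (hτ'1 : τ' 1 = c) :
    ∀ s ∈ Set.Icc (0:ℝ) 1,
      c - (c + ∫ σ in (0:ℝ)..1, h σ) * ∫ σ in (0:ℝ)..1, σ * a σ ≤ τ' s ∧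
      τ' s ≤ c + ∫ σ in (0:ℝ)..1, h σ := by
  subst hτ'1
  have hsol : IsTensionSolution a h τ τ' := ⟨hτ0, hτ, hτ'⟩
  have hpos := hsol.nonneg ha_cont ha_nonneg hh_cont hh_nonneg hc
  exact fun s hs => ⟨hsol.le_deriv ha_cont ha_nonneg hh_cont hh_nonneg hpos s hs,
    hsol.deriv_le ha_nonneg hh_cont hh_nonneg hpos s hs⟩
end

section
/- Let a ∈ C([0,1]) be nonnegative with ∫₀¹ σ a(σ)dσ ≤ M². Then there is C = C(M) such that for any h ∈ C([0,1]), c ∈ ℝ, α ∈ [0,1], the solution τ of -τ''+aτ = h, τ(0)=0, τ'(1)=c satisfies |τ(s)| ≤ C(|c| s + s^{1−α} ∫₀¹ σ^α |h(σ)|dσ) and s^α|τ'(s)| ≤ C(|c| s^α + ∫₀¹ σ^α |h(σ)|dσ) for all s ∈ [0,1]. -/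
/-!
Since `a ≥ 0`, the maximum principle compares `τ` with the barrier
`w s = |τ' 1| s + ∫₀¹ min(s, σ) |h σ| dσ`, which solves `-w'' = |h|`, `w 0 = 0`,
`w' 1 = |τ' 1|`, so that `-w'' + a w ≥ ± h`; together with `min(s, σ) ≤ s^(1-α) σ^α` this gives
`|τ s| ≤ |τ' 1| s + s^(1-α) H`, where `H = ∫₀¹ σ^α |h σ| dσ`. Integrating the equation over
`[s, 1]` gives `τ' s = τ' 1 - ∫ₛ¹ (a τ - h)`, and inserting the bound on `τ` (with
`s^α σ^(1-α) ≤ σ` for `s ≤ σ`) and `∫₀¹ σ a ≤ M²` bounds `s^α |τ' s|`. Both estimates hold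
with `C = 1 + M²`.
-/

open MeasureTheory Set intervalIntegral

theorem min_le_rpow_mul_rpow {s x α : ℝ} (hs : 0 ≤ s) (hx : 0 ≤ x) (hα0 : 0 ≤ α)
    (hα1 : α ≤ 1) : min s x ≤ s ^ (1 - α) * x ^ α := by
  have hmin : 0 ≤ min s x := le_min hs hx
  calc min s x = min s x ^ (1 - α) * min s x ^ α := by
        rw [← Real.rpow_add' hmin (by norm_num), sub_add_cancel, Real.rpow_one]
    _ ≤ s ^ (1 - α) * x ^ α :=
        mul_le_mul (Real.rpow_le_rpow hmin (min_le_left s x) (sub_nonneg.2 hα1))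
          (Real.rpow_le_rpow hmin (min_le_right s x) hα0) (Real.rpow_nonneg hmin _)
          (Real.rpow_nonneg hs _)

theorem rpow_mul_rpow_one_sub_le {s x α : ℝ} (hs : 0 ≤ s) (hsx : s ≤ x) (hα0 : 0 ≤ α) :
    s ^ α * x ^ (1 - α) ≤ x :=
  calc s ^ α * x ^ (1 - α) ≤ x ^ α * x ^ (1 - α) := by
        gcongr
        exact Real.rpow_nonneg (hs.trans hsx) _
    _ = x := by rw [← Real.rpow_add' (hs.trans hsx) (by norm_num), add_sub_cancel, Real.rpow_one]

theorem rpow_mul_abs_mul_sub_le {s x α A T k c H : ℝ} (hs : 0 ≤ s) (hsx : s ≤ x) (hα0 : 0 ≤ α)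
    (hA : 0 ≤ A) (hH : 0 ≤ H) (hT : |T| ≤ c * x + x ^ (1 - α) * H) :
    s ^ α * |A * T - k| ≤ (c * s ^ α + H) * (x * A) + x ^ α * |k| := by
  have habs : |A * T - k| ≤ A * |T| + |k| := by
    simpa only [abs_mul, abs_of_nonneg hA] using abs_sub (A * T) k
  calc s ^ α * |A * T - k| ≤ s ^ α * (A * |T| + |k|) := by gcongr
    _ ≤ s ^ α * (A * (c * x + x ^ (1 - α) * H)) + x ^ α * |k| := by
        rw [mul_add]
        gcongr
    _ = A * (c * s ^ α * x + (s ^ α * x ^ (1 - α)) * H) + x ^ α * |k| := by ring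
    _ ≤ A * (c * s ^ α * x + x * H) + x ^ α * |k| := by
        gcongr
        exact rpow_mul_rpow_one_sub_le hs hsx hα0
    _ = (c * s ^ α + H) * (x * A) + x ^ α * |k| := by ring

theorem monotoneOn_Icc_of_deriv2_nonpos {v v' v'' : ℝ → ℝ} {p q : ℝ}
    (hv : ∀ x ∈ Icc p q, HasDerivWithinAt v (v' x) (Icc p q) x)
    (hv' : ∀ x ∈ Icc p q, HasDerivWithinAt v' (v'' x) (Icc p q) x)
    (hv'' : ∀ x ∈ Ioo p q, v'' x ≤ 0) (hq : 0 ≤ v' q) : MonotoneOn v (Icc p q) := by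
  have hanti : AntitoneOn v' (Icc p q) := by
    refine antitoneOn_of_hasDerivWithinAt_nonpos (f' := v'') (convex_Icc p q)
      (fun x hx => (hv' x hx).continuousWithinAt) ?_ ?_ <;> rw [interior_Icc]
    · exact fun x hx => (hv' x (Ioo_subset_Icc_self hx)).mono Ioo_subset_Icc_self
    · exact hv''
  refine monotoneOn_of_hasDerivWithinAt_nonneg (f' := v') (convex_Icc p q)
    (fun x hx => (hv x hx).continuousWithinAt) ?_ ?_ <;> rw [interior_Icc]
  · exact fun x hx => (hv x (Ioo_subset_Icc_self hx)).mono Ioo_subset_Icc_self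
  · exact fun x hx => hq.trans
      (hanti (Ioo_subset_Icc_self hx) (right_mem_Icc.2 (hx.1.trans hx.2).le) hx.2.le)

theorem nonneg_of_deriv2_le_mul {a v v' v'' : ℝ → ℝ}
    (ha : ∀ s ∈ Icc (0:ℝ) 1, 0 ≤ a s)
    (hv : ∀ s ∈ Icc (0:ℝ) 1, HasDerivWithinAt v (v' s) (Icc 0 1) s)
    (hv' : ∀ s ∈ Icc (0:ℝ) 1, HasDerivWithinAt v' (v'' s) (Icc 0 1) s)
    (hv'' : ∀ s ∈ Icc (0:ℝ) 1, v'' s ≤ a s * v s) (hv0 : 0 ≤ v 0) (hv1 : 0 ≤ v' 1) :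
    ∀ s ∈ Icc (0:ℝ) 1, 0 ≤ v s := by
  by_contra! ⟨s₀, hs₀, hvs₀⟩
  have hvc : ContinuousOn v (Icc 0 1) := fun s hs => (hv s hs).continuousWithinAt
  obtain ⟨m, hm, hmin⟩ := isCompact_Icc.exists_isMinOn (nonempty_Icc.2 zero_le_one) hvc
  have hvm : v m < 0 := (hmin hs₀).trans_lt hvs₀
  have hm₀ : 0 < m := hm.1.lt_of_ne (by rintro rfl; linarith)
  have hv'm : 0 ≤ v' m := by
    rcases hm.2.eq_or_lt with rfl | hm₁
    · exact hv1
    · have hloc : IsLocalMin v m := hmin.isLocalMin (Icc_mem_nhds hm₀ hm₁)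
      exact (hloc.hasDerivAt_eq_zero ((hv m hm).hasDerivAt (Icc_mem_nhds hm₀ hm₁))).ge
  -- `s₁` is the last point before `m` with `v ≥ 0`; on `[s₁, m]` we have `v'' ≤ a v ≤ 0`.
  set S := Icc 0 m ∩ v ⁻¹' Ici 0
  have hS : IsClosed S :=
    (hvc.mono (Icc_subset_Icc le_rfl hm.2)).preimage_isClosed_of_isClosed isClosed_Icc isClosed_Ici
  have hSbdd : BddAbove S := ⟨m, fun t ht => ht.1.2⟩
  set s₁ := sSup S
  have hs₁ : s₁ ∈ S := hS.csSup_mem ⟨0, ⟨le_rfl, hm.1⟩, hv0⟩ hSbdd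
  have hneg : ∀ t ∈ Ioc s₁ m, v t < 0 := fun t ht => not_le.1 fun hvt =>
    ht.1.not_ge (le_csSup hSbdd ⟨⟨hs₁.1.1.trans ht.1.le, ht.2⟩, hvt⟩)
  have hsub : Icc s₁ m ⊆ Icc 0 1 := Icc_subset_Icc hs₁.1.1 hm.2
  have hmono : MonotoneOn v (Icc s₁ m) :=
    monotoneOn_Icc_of_deriv2_nonpos (fun x hx => (hv x (hsub hx)).mono hsub)
      (fun x hx => (hv' x (hsub hx)).mono hsub)
      (fun x hx => (hv'' x (hsub (Ioo_subset_Icc_self hx))).trans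
        (mul_nonpos_of_nonneg_of_nonpos (ha x (hsub (Ioo_subset_Icc_self hx)))
          (hneg x ⟨hx.1, hx.2.le⟩).le))
      hv'm
  have := hmono (left_mem_Icc.2 hs₁.1.2) (right_mem_Icc.2 hs₁.1.2) hs₁.1.2
  linarith [show 0 ≤ v s₁ from hs₁.2]

theorem abs_le_of_deriv2_le {a h τ τ' w w' w'' : ℝ → ℝ}
    (ha : ∀ s ∈ Icc (0:ℝ) 1, 0 ≤ a s)
    (hτ : ∀ s ∈ Icc (0:ℝ) 1, HasDerivWithinAt τ (τ' s) (Icc 0 1) s)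
    (hτ' : ∀ s ∈ Icc (0:ℝ) 1, HasDerivWithinAt τ' (a s * τ s - h s) (Icc 0 1) s)
    (hw : ∀ s ∈ Icc (0:ℝ) 1, HasDerivWithinAt w (w' s) (Icc 0 1) s)
    (hw' : ∀ s ∈ Icc (0:ℝ) 1, HasDerivWithinAt w' (w'' s) (Icc 0 1) s)
    (hw'' : ∀ s ∈ Icc (0:ℝ) 1, w'' s ≤ a s * w s - |h s|)
    (h0 : |τ 0| ≤ w 0) (h1 : |τ' 1| ≤ w' 1) :
    ∀ s ∈ Icc (0:ℝ) 1, |τ s| ≤ w s := by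
  have hupper := nonneg_of_deriv2_le_mul (v := fun s => w s - τ s) ha
    (fun s hs => (hw s hs).sub (hτ s hs))
    (fun s hs => (hw' s hs).sub (hτ' s hs))
    (fun s hs => by linarith [hw'' s hs, le_abs_self (h s)])
    (by linarith [le_abs_self (τ 0)]) (by linarith [le_abs_self (τ' 1)])
  have hlower := nonneg_of_deriv2_le_mul (v := fun s => w s + τ s) ha
    (fun s hs => (hw s hs).add (hτ s hs))
    (fun s hs => (hw' s hs).add (hτ' s hs))
    (fun s hs => by linarith [hw'' s hs, neg_abs_le (h s)])
    (by linarith [neg_abs_le (τ 0)]) (by linarith [neg_abs_le (τ' 1)])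
  exact fun s hs => abs_le.2 ⟨by linarith [hlower s hs], by linarith [hupper s hs]⟩

theorem integral_tail_le_integral_of_nonneg {g : ℝ → ℝ} {p q s : ℝ} (hs : s ∈ Icc p q)
    (hg : IntervalIntegrable g volume p q) (hg0 : ∀ x ∈ Icc p q, 0 ≤ g x) :
    ∫ x in s..q, g x ≤ ∫ x in p..q, g x :=
  integral_mono_interval hs.1 hs.2 le_rfl
    ((ae_restrict_mem measurableSet_Ioc).mono fun x hx => hg0 x (Ioc_subset_Icc_self hx))
    hg

/-- `∫₀¹ min s x * f x dx`, the solution of `-w'' = f`, `w 0 = 0`, `w' 1 = 0`, split at `x = s`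
so that it can be differentiated in `s`. -/
noncomputable def dirichletNeumannPotential (f : ℝ → ℝ) (s : ℝ) : ℝ :=
  (∫ x in (0:ℝ)..s, x * f x) + s * ∫ x in s..1, f x

namespace dirichletNeumannPotential

variable {f : ℝ → ℝ}

theorem hasDerivAt (hf : Continuous f) (s : ℝ) :
    HasDerivAt (dirichletNeumannPotential f) (∫ x in s..1, f x) s := by
  have htail : HasDerivAt (fun u => ∫ x in u..1, f x) (-f s) s :=
    integral_hasDerivAt_left (hf.intervalIntegrable _ _) (hf.stronglyMeasurableAtFilter _ _)
      hf.continuousAt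
  have h := ((continuous_id.mul hf).integral_hasStrictDerivAt 0 s).hasDerivAt.add
    ((hasDerivAt_id s).mul htail)
  exact h.congr_deriv (by simp)

theorem eq_integral_min (hf : Continuous f) {s : ℝ} (hs : s ∈ Icc (0:ℝ) 1) :
    dirichletNeumannPotential f s = ∫ x in (0:ℝ)..1, min s x * f x := by
  have hint : ∀ p q : ℝ, IntervalIntegrable (fun x => min s x * f x) volume p q := fun p q =>
    ((continuous_const.min continuous_id).mul hf).intervalIntegrable p q
  rw [← integral_add_adjacent_intervals (hint 0 s) (hint s 1), dirichletNeumannPotential,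
    ← intervalIntegral.integral_const_mul]
  congr 1 <;> refine integral_congr fun x hx => ?_
  · rw [uIcc_of_le hs.1] at hx
    simp only [min_eq_right hx.2]
  · rw [uIcc_of_le hs.2] at hx
    simp only [min_eq_left hx.1]

theorem nonneg (hf : Continuous f) (hf0 : ∀ x ∈ Icc (0:ℝ) 1, 0 ≤ f x) {s : ℝ}
    (hs : s ∈ Icc (0:ℝ) 1) : 0 ≤ dirichletNeumannPotential f s := by
  rw [eq_integral_min hf hs]
  exact integral_nonneg zero_le_one fun x hx => mul_nonneg (le_min hs.1 hx.1) (hf0 x hx)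

theorem le_rpow_mul_integral (hf : Continuous f) (hf0 : ∀ x ∈ Icc (0:ℝ) 1, 0 ≤ f x)
    {α : ℝ} (hα0 : 0 ≤ α) (hα1 : α ≤ 1) {s : ℝ} (hs : s ∈ Icc (0:ℝ) 1) :
    dirichletNeumannPotential f s ≤ s ^ (1 - α) * ∫ x in (0:ℝ)..1, x ^ α * f x := by
  have hpow : Continuous fun x : ℝ => x ^ α := by fun_prop (disch := exact Or.inr hα0)
  rw [eq_integral_min hf hs, ← intervalIntegral.integral_const_mul]
  refine integral_mono_on zero_le_one
    (((continuous_const.min continuous_id).mul hf).intervalIntegrable _ _)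
    ((continuous_const.mul (hpow.mul hf)).intervalIntegrable _ _) fun x hx => ?_
  rw [← mul_assoc]
  exact mul_le_mul_of_nonneg_right (min_le_rpow_mul_rpow hs.1 hx.1 hα0 hα1) (hf0 x hx)

end dirichletNeumannPotential

section BoundaryValueProblem

variable {a h τ τ' : ℝ → ℝ} {α : ℝ}

theorem abs_le_of_mixedBVP (ha : ∀ s ∈ Icc (0:ℝ) 1, 0 ≤ a s)
    (hh : ContinuousOn h (Icc 0 1)) (hα0 : 0 ≤ α) (hα1 : α ≤ 1)
    (hτ : ∀ s ∈ Icc (0:ℝ) 1, HasDerivWithinAt τ (τ' s) (Icc 0 1) s)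
    (hτ' : ∀ s ∈ Icc (0:ℝ) 1, HasDerivWithinAt τ' (a s * τ s - h s) (Icc 0 1) s)
    (hτ0 : τ 0 = 0) :
    ∀ s ∈ Icc (0:ℝ) 1,
      |τ s| ≤ |τ' 1| * s + s ^ (1 - α) * ∫ σ in (0:ℝ)..1, σ ^ α * |h σ| := by
  set f := IccExtend zero_le_one ((Icc (0:ℝ) 1).domRestrict fun x => |h x|)
  have hf : Continuous f := hh.abs.domRestrict.Icc_extend'
  have hfh : ∀ x ∈ Icc (0:ℝ) 1, f x = |h x| := fun x hx => IccExtend_of_mem _ _ hx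
  have hf0 : ∀ x ∈ Icc (0:ℝ) 1, 0 ≤ f x := fun x hx => (hfh x hx).symm ▸ abs_nonneg _
  have hbarrier : ∀ s ∈ Icc (0:ℝ) 1, |τ s| ≤ |τ' 1| * s + dirichletNeumannPotential f s := by
    refine abs_le_of_deriv2_le ha hτ hτ' (w' := fun s => |τ' 1| + ∫ x in s..1, f x)
      (w'' := fun s => -f s) (fun s _ => ?_) (fun s _ => ?_) (fun s hs => ?_) ?_ ?_
    · exact (((hasDerivAt_id s).const_mul _).add
        (dirichletNeumannPotential.hasDerivAt hf s)).hasDerivWithinAt.congr_deriv (by simp)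
    · exact ((integral_hasDerivAt_left (hf.intervalIntegrable _ _)
        (hf.stronglyMeasurableAtFilter _ _) hf.continuousAt).const_add _).hasDerivWithinAt
    · have : 0 ≤ a s * (|τ' 1| * s + dirichletNeumannPotential f s) :=
        mul_nonneg (ha s hs) (add_nonneg (mul_nonneg (abs_nonneg _) hs.1)
          (dirichletNeumannPotential.nonneg hf hf0 hs))
      linarith [hfh s hs]
    · simp [hτ0, dirichletNeumannPotential]
    · simp
  have hint : (∫ x in (0:ℝ)..1, x ^ α * f x) = ∫ σ in (0:ℝ)..1, σ ^ α * |h σ| :=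
    integral_congr fun x hx => by
      rw [uIcc_of_le zero_le_one] at hx
      simp only [hfh x hx]
  intro s hs
  calc |τ s| ≤ |τ' 1| * s + dirichletNeumannPotential f s := hbarrier s hs
    _ ≤ |τ' 1| * s + s ^ (1 - α) * ∫ σ in (0:ℝ)..1, σ ^ α * |h σ| := by
      rw [← hint]
      exact add_le_add_right (dirichletNeumannPotential.le_rpow_mul_integral hf hf0 hα0 hα1 hs) _

theorem rpow_mul_abs_deriv_le_of_mixedBVP (ha_cont : ContinuousOn a (Icc 0 1))
    (ha : ∀ s ∈ Icc (0:ℝ) 1, 0 ≤ a s) (hh : ContinuousOn h (Icc 0 1)) (hα0 : 0 ≤ α)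
    (hα1 : α ≤ 1) (hτ : ∀ s ∈ Icc (0:ℝ) 1, HasDerivWithinAt τ (τ' s) (Icc 0 1) s)
    (hτ' : ∀ s ∈ Icc (0:ℝ) 1, HasDerivWithinAt τ' (a s * τ s - h s) (Icc 0 1) s)
    (hτ0 : τ 0 = 0) :
    ∀ s ∈ Icc (0:ℝ) 1, s ^ α * |τ' s| ≤ |τ' 1| * s ^ α
      + (|τ' 1| * s ^ α + ∫ σ in (0:ℝ)..1, σ ^ α * |h σ|) * (∫ σ in (0:ℝ)..1, σ * a σ)
      + ∫ σ in (0:ℝ)..1, σ ^ α * |h σ| := by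
  intro s hs
  set H := ∫ σ in (0:ℝ)..1, σ ^ α * |h σ|
  set B := |τ' 1| * s ^ α + H
  have hsub : Icc s 1 ⊆ Icc 0 1 := Icc_subset_Icc hs.1 le_rfl
  have hsα : 0 ≤ s ^ α := Real.rpow_nonneg hs.1 α
  have hH : 0 ≤ H := integral_nonneg zero_le_one fun x hx =>
    mul_nonneg (Real.rpow_nonneg hx.1 α) (abs_nonneg _)
  have hrhs : ContinuousOn (fun x => a x * τ x - h x) (Icc 0 1) :=
    (ha_cont.mul fun x hx => (hτ x hx).continuousWithinAt).sub hh
  have hxa : ContinuousOn (fun x => x * a x) (Icc 0 1) := continuousOn_id.mul ha_cont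
  have hxh : ContinuousOn (fun x => x ^ α * |h x|) (Icc 0 1) :=
    (continuousOn_id.rpow_const fun _ _ => Or.inr hα0).mul hh.abs
  have hint_rhs :=
    ((hrhs.abs.mono hsub).intervalIntegrable_of_Icc (μ := volume) hs.2).const_mul (s ^ α)
  have hint_xa := ((hxa.mono hsub).intervalIntegrable_of_Icc (μ := volume) hs.2).const_mul B
  have hint_xh := (hxh.mono hsub).intervalIntegrable_of_Icc (μ := volume) hs.2
  have hftc : ∫ x in s..1, (a x * τ x - h x) = τ' 1 - τ' s :=
    integral_eq_sub_of_hasDerivAt_of_le hs.2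
      (fun x hx => ((hτ' x (hsub hx)).continuousWithinAt).mono hsub)
      (fun x hx => (hτ' x (hsub (Ioo_subset_Icc_self hx))).hasDerivAt
        (Icc_mem_nhds (hs.1.trans_lt hx.1) hx.2))
      ((hrhs.mono hsub).intervalIntegrable_of_Icc hs.2)
  have hpointwise : ∀ x ∈ Icc s 1,
      s ^ α * |a x * τ x - h x| ≤ B * (x * a x) + x ^ α * |h x| := fun x hx =>
    rpow_mul_abs_mul_sub_le hs.1 hx.1 hα0 (ha x (hsub hx)) hH
      (abs_le_of_mixedBVP ha hh hα0 hα1 hτ hτ' hτ0 x (hsub hx))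
  calc s ^ α * |τ' s| = s ^ α * |τ' 1 - ∫ x in s..1, (a x * τ x - h x)| := by
        rw [hftc, sub_sub_cancel]
    _ ≤ s ^ α * (|τ' 1| + ∫ x in s..1, |a x * τ x - h x|) := by
        gcongr
        exact (abs_sub _ _).trans (add_le_add_right (abs_integral_le_integral_abs hs.2) _)
    _ = |τ' 1| * s ^ α + ∫ x in s..1, s ^ α * |a x * τ x - h x| := by
        rw [intervalIntegral.integral_const_mul]; ring
    _ ≤ |τ' 1| * s ^ α + ∫ x in s..1, (B * (x * a x) + x ^ α * |h x|) := by
        gcongr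
        exact integral_mono_on hs.2 hint_rhs (hint_xa.add hint_xh) hpointwise
    _ = |τ' 1| * s ^ α + (B * ∫ x in s..1, x * a x) + ∫ x in s..1, x ^ α * |h x| := by
        rw [integral_add hint_xa hint_xh, intervalIntegral.integral_const_mul, add_assoc]
    _ ≤ |τ' 1| * s ^ α + (B * ∫ x in (0:ℝ)..1, x * a x) + H := by
        gcongr
        · exact integral_tail_le_integral_of_nonneg hs (hxa.intervalIntegrable_of_Icc zero_le_one)
            fun x hx => mul_nonneg hx.1 (ha x hx)
        · exact integral_tail_le_integral_of_nonneg hs (hxh.intervalIntegrable_of_Icc zero_le_one)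
            fun x hx => mul_nonneg (Real.rpow_nonneg hx.1 α) (abs_nonneg _)

end BoundaryValueProblem

theorem stmt_13_general (M : ℝ) :
    ∃ C > (0:ℝ), ∀ (a h : ℝ → ℝ) (c α : ℝ),
      ContinuousOn a (Set.Icc 0 1) →
      (∀ s ∈ Set.Icc (0:ℝ) 1, 0 ≤ a s) →
      (∫ σ in (0:ℝ)..1, σ * a σ) ≤ M ^ 2 →
      ContinuousOn h (Set.Icc 0 1) →
      0 ≤ α → α ≤ 1 →
      ∀ τ τ' : ℝ → ℝ,
        (∀ s ∈ Set.Icc (0:ℝ) 1, HasDerivWithinAt τ (τ' s) (Set.Icc 0 1) s) →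
        (∀ s ∈ Set.Icc (0:ℝ) 1, HasDerivWithinAt τ' (a s * τ s - h s) (Set.Icc 0 1) s) →
        τ 0 = 0 → τ' 1 = c →
        ∀ s ∈ Set.Icc (0:ℝ) 1,
          |τ s| ≤ C * (|c| * s + s ^ (1 - α) * ∫ σ in (0:ℝ)..1, σ ^ α * |h σ|) ∧
          s ^ α * |τ' s| ≤ C * (|c| * s ^ α + ∫ σ in (0:ℝ)..1, σ ^ α * |h σ|) := by
  refine ⟨1 + M ^ 2, by positivity, ?_⟩
  rintro a h _ α ha_cont ha ha_M hh hα0 hα1 τ τ' hτ hτ' hτ0 rfl s hs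
  set H := ∫ σ in (0:ℝ)..1, σ ^ α * |h σ|
  have hH : 0 ≤ H := integral_nonneg zero_le_one fun x hx =>
    mul_nonneg (Real.rpow_nonneg hx.1 α) (abs_nonneg _)
  have hsα : 0 ≤ s ^ α := Real.rpow_nonneg hs.1 α
  constructor
  · calc |τ s| ≤ |τ' 1| * s + s ^ (1 - α) * H :=
          abs_le_of_mixedBVP ha hh hα0 hα1 hτ hτ' hτ0 s hs
      _ ≤ (1 + M ^ 2) * (|τ' 1| * s + s ^ (1 - α) * H) :=
          le_mul_of_one_le_left (add_nonneg (mul_nonneg (abs_nonneg _) hs.1)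
            (mul_nonneg (Real.rpow_nonneg hs.1 _) hH)) (le_add_of_nonneg_right (sq_nonneg M))
  · calc s ^ α * |τ' s|
          ≤ |τ' 1| * s ^ α + (|τ' 1| * s ^ α + H) * (∫ σ in (0:ℝ)..1, σ * a σ) + H :=
          rpow_mul_abs_deriv_le_of_mixedBVP ha_cont ha hh hα0 hα1 hτ hτ' hτ0 s hs
      _ ≤ |τ' 1| * s ^ α + (|τ' 1| * s ^ α + H) * M ^ 2 + H := by gcongr
      _ = (1 + M ^ 2) * (|τ' 1| * s ^ α + H) := by ring

/-- Weighted pointwise estimates for the solution of the BVP `-τ'' + a τ = h`,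
`τ(0)=0`, `τ'(1)=c` without sign conditions: for `∫₀¹ σ a ≤ M²` there is `C = C(M)`
with `|τ(s)| ≤ C(|c| s + s^{1-α} ∫₀¹ σ^α |h|)` and
`s^α |τ'(s)| ≤ C(|c| s^α + ∫₀¹ σ^α |h|)` for all `α ∈ [0,1]`. -/
theorem stmt_13 (M : ℝ) (hM : 0 < M) :
    ∃ C > (0:ℝ), ∀ (a h : ℝ → ℝ) (c α : ℝ),
      ContinuousOn a (Set.Icc 0 1) →
      (∀ s ∈ Set.Icc (0:ℝ) 1, 0 ≤ a s) →
      (∫ σ in (0:ℝ)..1, σ * a σ) ≤ M ^ 2 →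
      ContinuousOn h (Set.Icc 0 1) →
      0 ≤ α → α ≤ 1 →
      ∀ τ τ' : ℝ → ℝ,
        (∀ s ∈ Set.Icc (0:ℝ) 1, HasDerivWithinAt τ (τ' s) (Set.Icc 0 1) s) →
        (∀ s ∈ Set.Icc (0:ℝ) 1, HasDerivWithinAt τ' (a s * τ s - h s) (Set.Icc 0 1) s) →
        τ 0 = 0 → τ' 1 = c →
        ∀ s ∈ Set.Icc (0:ℝ) 1,
          |τ s| ≤ C * (|c| * s + s ^ (1 - α) * ∫ σ in (0:ℝ)..1, σ ^ α * |h σ|) ∧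
          s ^ α * |τ' s| ≤ C * (|c| * s ^ α + ∫ σ in (0:ℝ)..1, σ ^ α * |h σ|) :=
  stmt_13_general M
end

section
/- Let a ∈ C([0,1]) be nonnegative with ∫₀¹ σ a(σ)dσ ≤ M². Then there is C = C(M) such that for any p ∈ [1,∞], α ≥ 0 with α + 1/p ≤ 1, any h ∈ C([0,1]) and c ∈ ℝ, the solution τ of -τ''+aτ=h, τ(0)=0, τ'(1)=c satisfies ‖s^α τ'‖_{L^p(0,1)} ≤ C(|c| + ∫₀¹ s^{α+1/p}|h(s)|ds). -/
open MeasureTheory ENNReal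
open Set intervalIntegral

/-!
Let `χ(s) = |c| s + ∫₀¹ min(s,t) |h t| dt`, the solution of `-χ'' = |h|`, `χ(0) = 0`,
`χ'(1) = |c|`. Since `a ≥ 0`, the maximum principle for `-d² + a`, applied to `χ ∓ τ`, gives
`|τ| ≤ χ`, and `min(s,t) ≤ s^(1-β) t^β` with `β = α + 1/p ≤ 1` gives `χ(s) ≤ s^(1-β) K`, where
`K = |c| + ∫₀¹ t^β |h t| dt`. Integrating `τ'' = aτ - h` from `s` to `1` bounds `|τ'(s)|` by
`T(s) = |c| + ∫ₛ¹ g` with `g = |h| + aχ`, and `∫₀¹ t^β g ≤ (1 + ∫₀¹ t a) K ≤ (1 + M²) K`.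

It remains to bound `‖s^α T‖_p` by `2 B`, `B = |c| + ∫₀¹ t^β g`. Clearly `s^β T(s) ≤ B`, which is
the case `p = ∞`; for `p = q < ∞` write `(s^α T)^q = (s^β T)^(q-1) · s^(β-1) T` and use
`β ∫₀¹ s^(β-1) T = B` (integration by parts) to get `‖s^α T‖_q^q ≤ B^q / β ≤ q B^q ≤ (2B)^q`.
-/

theorem IsLocalMin.deriv_deriv_nonneg {f : ℝ → ℝ} {x : ℝ} (h : IsLocalMin f x)
    (hc : ContinuousAt f x) : 0 ≤ deriv (deriv f) x := by
  by_contra! hneg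
  have hconst : f =ᶠ[nhds x] fun _ => f x :=
    (h.and (isLocalMax_of_deriv_deriv_neg hneg h.deriv_eq_zero hc)).mono
      fun y hy => le_antisymm hy.2 hy.1
  rw [hconst.deriv.deriv_eq] at hneg
  simp at hneg

theorem ContinuousOn.intervalIntegrable_of_mem {f : ℝ → ℝ} {a b u v : ℝ}
    (hf : ContinuousOn f (Icc a b)) (hu : u ∈ Icc a b) (hv : v ∈ Icc a b) :
    IntervalIntegrable f volume u v :=
  (hf.mono (uIcc_subset_Icc hu hv)).intervalIntegrable

theorem ContinuousOn.hasDerivWithinAt_integral_left {f : ℝ → ℝ} {a b s : ℝ}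
    (hf : ContinuousOn f (Icc a b)) (hs : s ∈ Icc a b) :
    HasDerivWithinAt (fun u => ∫ t in u..b, f t) (-f s) (Icc a b) s := by
  have : Fact (s ∈ Icc a b) := ⟨hs⟩
  exact integral_hasDerivWithinAt_left (hf.intervalIntegrable_of_mem hs (right_mem_Icc.mpr
    (hs.1.trans hs.2))) ⟨Icc a b, self_mem_nhdsWithin, hf.aestronglyMeasurable measurableSet_Icc⟩
    (hf s hs)

theorem ContinuousOn.hasDerivWithinAt_integral_right {f : ℝ → ℝ} {a b s : ℝ}
    (hf : ContinuousOn f (Icc a b)) (hs : s ∈ Icc a b) :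
    HasDerivWithinAt (fun u => ∫ t in a..u, f t) (f s) (Icc a b) s := by
  have : Fact (s ∈ Icc a b) := ⟨hs⟩
  exact integral_hasDerivWithinAt_right (hf.intervalIntegrable_of_mem (left_mem_Icc.mpr
    (hs.1.trans hs.2)) hs) ⟨Icc a b, self_mem_nhdsWithin, hf.aestronglyMeasurable measurableSet_Icc⟩
    (hf s hs)

theorem abs_le_add_integral_of_hasDerivWithinAt {u u' g : ℝ → ℝ} {a b s : ℝ}
    (hu : ∀ x ∈ Icc a b, HasDerivWithinAt u (u' x) (Icc a b) x) (hu' : ContinuousOn u' (Icc a b))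
    (hg : ContinuousOn g (Icc a b)) (hle : ∀ x ∈ Icc a b, |u' x| ≤ g x) (hs : s ∈ Icc a b) :
    |u s| ≤ |u b| + ∫ t in s..b, g t := by
  have hb : b ∈ Icc a b := right_mem_Icc.mpr (hs.1.trans hs.2)
  have hsub : Icc s b ⊆ Icc a b := Icc_subset_Icc hs.1 le_rfl
  have hftc : ∫ t in s..b, u' t = u b - u s :=
    integral_eq_sub_of_hasDerivAt_of_le hs.2
      (fun x hx => ((hu x (hsub hx)).continuousWithinAt).mono hsub)
      (fun x hx => (hu x (hsub (Ioo_subset_Icc_self hx))).hasDerivAt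
        (Icc_mem_nhds (hs.1.trans_lt hx.1) hx.2))
      (hu'.intervalIntegrable_of_mem hs hb)
  calc |u s| = |u b - ∫ t in s..b, u' t| := by rw [hftc]; congr 1; ring
    _ ≤ |u b| + |∫ t in s..b, u' t| := abs_sub _ _
    _ ≤ |u b| + ∫ t in s..b, |u' t| := by gcongr; exact abs_integral_le_integral_abs hs.2
    _ ≤ |u b| + ∫ t in s..b, g t := by
        gcongr
        exact integral_mono_on hs.2 (hu'.abs.intervalIntegrable_of_mem hs hb)
          (hg.intervalIntegrable_of_mem hs hb) fun x hx => hle x (hsub hx)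

theorem eLpNorm_restrict_Ioc_le_of_integral_rpow_le {f : ℝ → ℝ} {a b A : ℝ} {p : ℝ≥0∞}
    (hf : ContinuousOn f (Icc a b)) (hab : a ≤ b) (hp₀ : p ≠ 0) (hp : p ≠ ∞) (hA : 0 ≤ A)
    (h : ∫ s in a..b, |f s| ^ p.toReal ≤ A ^ p.toReal) :
    eLpNorm f p (volume.restrict (Ioc a b)) ≤ ENNReal.ofReal A := by
  obtain ⟨C, hC⟩ := isCompact_Icc.exists_bound_of_continuousOn hf
  have hmem : MemLp f p (volume.restrict (Ioc a b)) :=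
    MemLp.of_bound ((hf.mono Ioc_subset_Icc_self).aestronglyMeasurable measurableSet_Ioc) C
      ((ae_restrict_iff' measurableSet_Ioc).mpr
        (ae_of_all _ fun s hs => hC s (Ioc_subset_Icc_self hs)))
  have hq : 0 < p.toReal := ENNReal.toReal_pos hp₀ hp
  rw [hmem.eLpNorm_eq_integral_rpow_norm hp₀ hp, ← integral_of_le hab]
  refine ENNReal.ofReal_le_ofReal ?_
  simp only [Real.norm_eq_abs]
  calc _ ≤ (A ^ p.toReal) ^ p.toReal⁻¹ :=
        Real.rpow_le_rpow (integral_nonneg hab fun s _ => by positivity) h (by positivity)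
    _ = A := Real.rpow_rpow_inv hA hq.ne'

namespace MixedBVP

def Solves (a f w w' : ℝ → ℝ) : Prop :=
  ∀ s ∈ Icc (0:ℝ) 1,
    HasDerivWithinAt w (w' s) (Icc 0 1) s ∧ HasDerivWithinAt w' (a s * w s - f s) (Icc 0 1) s

namespace Solves

variable {a f f₁ f₂ w w' w₁ w₁' w₂ w₂' : ℝ → ℝ}

theorem add (h₁ : Solves a f₁ w₁ w₁') (h₂ : Solves a f₂ w₂ w₂') :
    Solves a (f₁ + f₂) (w₁ + w₂) (w₁' + w₂') := fun s hs =>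
  ⟨(h₁ s hs).1.add (h₂ s hs).1,
    ((h₁ s hs).2.add (h₂ s hs).2).congr_deriv (by simp only [Pi.add_apply]; ring)⟩

theorem sub (h₁ : Solves a f₁ w₁ w₁') (h₂ : Solves a f₂ w₂ w₂') :
    Solves a (f₁ - f₂) (w₁ - w₂) (w₁' - w₂') := fun s hs =>
  ⟨(h₁ s hs).1.sub (h₂ s hs).1,
    ((h₁ s hs).2.sub (h₂ s hs).2).congr_deriv (by simp only [Pi.sub_apply]; ring)⟩

theorem neg (h : Solves a f w w') : Solves a (-f) (-w) (-w') := fun s hs =>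
  ⟨(h s hs).1.neg, (h s hs).2.neg.congr_deriv (by simp only [Pi.neg_apply]; ring)⟩

theorem const_smul (h : Solves a f w w') (ε : ℝ) : Solves a (ε • f) (ε • w) (ε • w') :=
  fun s hs => ⟨(h s hs).1.const_smul ε,
    ((h s hs).2.const_smul ε).congr_deriv (by simp only [Pi.smul_apply, smul_eq_mul]; ring)⟩

theorem continuousOn (h : Solves a f w w') : ContinuousOn w (Icc 0 1) :=
  fun s hs => (h s hs).1.continuousWithinAt

theorem nonneg_of_pos (h : Solves a f w w') (ha : ∀ s ∈ Icc (0:ℝ) 1, 0 ≤ a s)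
    (hf : ∀ s ∈ Icc (0:ℝ) 1, 0 < f s) (h0 : w 0 = 0) (h1 : 0 < w' 1) :
    ∀ s ∈ Icc (0:ℝ) 1, 0 ≤ w s := by
  obtain ⟨s₀, hs₀, hmin⟩ :=
    isCompact_Icc.exists_isMinOn (nonempty_Icc.mpr zero_le_one) h.continuousOn
  refine fun s hs => le_trans (not_lt.mp fun hneg => ?_) (hmin hs)
  rcases eq_or_lt_of_le hs₀.1 with rfl | hpos
  · exact hneg.ne h0
  rcases eq_or_lt_of_le hs₀.2 with rfl | hlt
  · have hin : (0:ℝ) - 1 ∈ posTangentConeAt (Icc (0:ℝ) 1) 1 :=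
      sub_mem_posTangentConeAt_of_segment_subset
        ((convex_Icc 0 1).segment_subset hs₀ unitInterval.zero_mem)
    have := (hmin.localize.on_subset subset_rfl).hasFDerivWithinAt_nonneg
      (h 1 hs₀).1.hasFDerivWithinAt hin
    simp only [zero_sub, ContinuousLinearMap.toSpanSingleton_apply, smul_eq_mul, neg_mul, one_mul,
      Left.nonneg_neg_iff] at this
    linarith
  · have hderiv : deriv w =ᶠ[nhds s₀] w' :=
      Filter.mem_of_superset (Ioo_mem_nhds hpos hlt) fun x hx =>
        ((h x (Ioo_subset_Icc_self hx)).1.hasDerivAt (Icc_mem_nhds hx.1 hx.2)).deriv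
    have hw'' : HasDerivAt w' (a s₀ * w s₀ - f s₀) s₀ :=
      (h s₀ hs₀).2.hasDerivAt (Icc_mem_nhds hpos hlt)
    have := (hmin.isLocalMin (Icc_mem_nhds hpos hlt)).deriv_deriv_nonneg
      ((h s₀ hs₀).1.hasDerivAt (Icc_mem_nhds hpos hlt)).continuousAt
    rw [hderiv.deriv_eq, hw''.deriv] at this
    nlinarith [ha s₀ hs₀, hf s₀ hs₀]

theorem nonneg (h : Solves a f w w') (ha : ∀ s ∈ Icc (0:ℝ) 1, 0 ≤ a s)
    (hf : ∀ s ∈ Icc (0:ℝ) 1, 0 ≤ f s) (h0 : w 0 = 0) (h1 : 0 ≤ w' 1) :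
    ∀ s ∈ Icc (0:ℝ) 1, 0 ≤ w s := by
  -- `w + ε φ` satisfies the strict hypotheses: `φ(0) = 0`, `φ'(1) > 0` and `-φ'' + a φ > 0`
  set φ : ℝ → ℝ := fun u => u * (3 - u)
  have hφ : Solves a (fun u => a u * φ u + 2) φ (fun u => 3 - 2 * u) := fun s _ =>
    ⟨((hasDerivWithinAt_id s _).mul ((hasDerivWithinAt_id s _).const_sub 3)).congr_deriv
        (by simp only [id]; ring),
      ((hasDerivWithinAt_id s _).const_mul 2).const_sub 3 |>.congr_deriv (by ring)⟩
  intro s hs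
  refine le_of_forall_pos_le_add fun ε hε => ?_
  have hpert := (h.add (hφ.const_smul (ε / 2))).nonneg_of_pos ha
    (fun u hu => by
      have : 0 ≤ a u * φ u := mul_nonneg (ha u hu) (mul_nonneg hu.1 (by linarith [hu.2]))
      simp only [Pi.add_apply, Pi.smul_apply, smul_eq_mul]
      nlinarith [hf u hu])
    (by simp [h0, φ]) (by simp only [Pi.add_apply, Pi.smul_apply, smul_eq_mul]; linarith) s hs
  simp only [Pi.add_apply, Pi.smul_apply, smul_eq_mul, φ] at hpert
  have hφ2 : s * (3 - s) ≤ 2 := by nlinarith [hs.1, hs.2]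
  nlinarith [mul_le_mul_of_nonneg_left hφ2 (half_pos hε).le]

end Solves

noncomputable def tailIntegral (c : ℝ) (g : ℝ → ℝ) (s : ℝ) : ℝ := c + ∫ t in s..1, g t

/-- `c s + ∫₀¹ min(s,t) k(t) dt`, the solution of `-χ'' = k`, `χ(0) = 0`, `χ'(1) = c`. -/
noncomputable def greenPotential (c : ℝ) (k : ℝ → ℝ) (s : ℝ) : ℝ :=
  c * s + (∫ t in (0:ℝ)..s, t * k t) + s * ∫ t in s..1, k t

variable {a f g k w w' : ℝ → ℝ} {c s : ℝ}

theorem hasDerivWithinAt_tailIntegral (hg : ContinuousOn g (Icc 0 1)) (hs : s ∈ Icc (0:ℝ) 1) :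
    HasDerivWithinAt (tailIntegral c g) (-g s) (Icc 0 1) s :=
  (hg.hasDerivWithinAt_integral_left hs).const_add c

theorem continuousOn_tailIntegral (hg : ContinuousOn g (Icc 0 1)) :
    ContinuousOn (tailIntegral c g) (Icc 0 1) :=
  fun _ hs => (hasDerivWithinAt_tailIntegral hg hs).continuousWithinAt

theorem tailIntegral_one : tailIntegral c g 1 = c := by simp [tailIntegral]

theorem tailIntegral_nonneg (hc : 0 ≤ c) (hg : ∀ t ∈ Icc (0:ℝ) 1, 0 ≤ g t)
    (hs : s ∈ Icc (0:ℝ) 1) : 0 ≤ tailIntegral c g s :=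
  add_nonneg hc (integral_nonneg hs.2 fun t ht => hg t ⟨hs.1.trans ht.1, ht.2⟩)

theorem add_integral_rpow_mul_nonneg {β : ℝ} (hc : 0 ≤ c) (hg : ∀ t ∈ Icc (0:ℝ) 1, 0 ≤ g t) :
    0 ≤ c + ∫ t in (0:ℝ)..1, t ^ β * g t :=
  add_nonneg hc <| integral_nonneg zero_le_one fun t ht =>
    mul_nonneg (Real.rpow_nonneg ht.1 β) (hg t ht)

theorem hasDerivWithinAt_greenPotential (hk : ContinuousOn k (Icc 0 1)) (hs : s ∈ Icc (0:ℝ) 1) :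
    HasDerivWithinAt (greenPotential c k) (tailIntegral c k s) (Icc 0 1) s := by
  have hid := hasDerivWithinAt_id s (Icc (0:ℝ) 1)
  exact (((hid.const_mul c).add ((continuousOn_id.mul hk).hasDerivWithinAt_integral_right hs)).add
    (hid.mul (hk.hasDerivWithinAt_integral_left hs))).congr_deriv
    (by simp only [tailIntegral, id, Pi.mul_apply]; ring)

theorem continuousOn_greenPotential (hk : ContinuousOn k (Icc 0 1)) :
    ContinuousOn (greenPotential c k) (Icc 0 1) :=
  fun _ hs => (hasDerivWithinAt_greenPotential hk hs).continuousWithinAt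

theorem solves_greenPotential (hk : ContinuousOn k (Icc 0 1)) :
    Solves a (fun s => a s * greenPotential c k s + k s) (greenPotential c k) (tailIntegral c k) :=
  fun _ hs => ⟨hasDerivWithinAt_greenPotential hk hs,
    (hasDerivWithinAt_tailIntegral hk hs).congr_deriv (by ring)⟩

theorem greenPotential_nonneg (hc : 0 ≤ c) (hk : ∀ t ∈ Icc (0:ℝ) 1, 0 ≤ k t)
    (hs : s ∈ Icc (0:ℝ) 1) : 0 ≤ greenPotential c k s := by
  have h₁ : 0 ≤ ∫ t in (0:ℝ)..s, t * k t :=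
    integral_nonneg hs.1 fun t ht => mul_nonneg ht.1 (hk t ⟨ht.1, ht.2.trans hs.2⟩)
  have h₂ : 0 ≤ ∫ t in s..1, k t := integral_nonneg hs.2 fun t ht => hk t ⟨hs.1.trans ht.1, ht.2⟩
  unfold greenPotential
  have := hs.1
  positivity

theorem min_le_rpow_mul_rpow {s t β : ℝ} (hs : 0 ≤ s) (ht : 0 ≤ t) (hβ₀ : 0 ≤ β) (hβ₁ : β ≤ 1) :
    min s t ≤ s ^ (1 - β) * t ^ β := by
  have hm := le_min hs ht
  calc min s t = min s t ^ (1 - β) * min s t ^ β := by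
        rw [← Real.rpow_add' hm (by norm_num), sub_add_cancel, Real.rpow_one]
    _ ≤ s ^ (1 - β) * t ^ β :=
        mul_le_mul (Real.rpow_le_rpow hm (min_le_left s t) (by linarith))
          (Real.rpow_le_rpow hm (min_le_right s t) hβ₀) (Real.rpow_nonneg hm _)
          (Real.rpow_nonneg hs _)

theorem greenPotential_le_rpow_mul {β : ℝ} (hc : 0 ≤ c) (hk : ContinuousOn k (Icc 0 1))
    (hk₀ : ∀ t ∈ Icc (0:ℝ) 1, 0 ≤ k t) (hβ₀ : 0 ≤ β) (hβ₁ : β ≤ 1) (hs : s ∈ Icc (0:ℝ) 1) :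
    greenPotential c k s ≤ s ^ (1 - β) * (c + ∫ t in (0:ℝ)..1, t ^ β * k t) := by
  have hw : ContinuousOn (fun t => s ^ (1 - β) * (t ^ β * k t)) (Icc 0 1) :=
    continuousOn_const.mul ((Real.continuous_rpow_const hβ₀).continuousOn.mul hk)
  have hc' : c * s ≤ c * s ^ (1 - β) := by
    gcongr
    simpa using Real.rpow_le_rpow_of_exponent_ge' hs.1 hs.2 (by linarith) (by linarith : 1 - β ≤ 1)
  have hleft : ∫ t in (0:ℝ)..s, t * k t ≤ ∫ t in (0:ℝ)..s, s ^ (1 - β) * (t ^ β * k t) :=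
    integral_mono_on hs.1
      ((continuousOn_id.mul hk).intervalIntegrable_of_mem unitInterval.zero_mem hs)
      (hw.intervalIntegrable_of_mem unitInterval.zero_mem hs) fun t ht => by
        have := min_le_rpow_mul_rpow hs.1 ht.1 hβ₀ hβ₁
        rw [min_eq_right ht.2] at this
        have := hk₀ t ⟨ht.1, ht.2.trans hs.2⟩
        nlinarith
  have hright : ∫ t in s..1, s * k t ≤ ∫ t in s..1, s ^ (1 - β) * (t ^ β * k t) :=
    integral_mono_on hs.2
      ((continuousOn_const.mul hk).intervalIntegrable_of_mem hs unitInterval.one_mem)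
      (hw.intervalIntegrable_of_mem hs unitInterval.one_mem) fun t ht => by
        have := min_le_rpow_mul_rpow hs.1 (hs.1.trans ht.1) hβ₀ hβ₁
        rw [min_eq_left ht.1] at this
        have := hk₀ t ⟨hs.1.trans ht.1, ht.2⟩
        nlinarith
  have hsplit := integral_add_adjacent_intervals
    (hw.intervalIntegrable_of_mem unitInterval.zero_mem hs)
    (hw.intervalIntegrable_of_mem hs unitInterval.one_mem)
  simp only [intervalIntegral.integral_const_mul] at hleft hright hsplit
  unfold greenPotential
  nlinarith

theorem Solves.le_greenPotential (h : Solves a f w w') (ha : ∀ s ∈ Icc (0:ℝ) 1, 0 ≤ a s)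
    (hf : ContinuousOn f (Icc 0 1)) (h0 : w 0 = 0) (hs : s ∈ Icc (0:ℝ) 1) :
    w s ≤ greenPotential |w' 1| (fun t => |f t|) s := by
  have hχ := (solves_greenPotential (a := a) (c := |w' 1|) hf.abs).sub h
  refine sub_nonneg.mp (hχ.nonneg ha (fun t ht => ?_) ?_ ?_ s hs)
  · have := mul_nonneg (ha t ht) (greenPotential_nonneg (abs_nonneg (w' 1))
      (fun t _ => abs_nonneg (f t)) ht)
    simp only [Pi.sub_apply]
    linarith [le_abs_self (f t)]
  · simp [greenPotential, h0]
  · simp [tailIntegral_one, le_abs_self]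

theorem Solves.abs_le_greenPotential (h : Solves a f w w') (ha : ∀ s ∈ Icc (0:ℝ) 1, 0 ≤ a s)
    (hf : ContinuousOn f (Icc 0 1)) (h0 : w 0 = 0) (hs : s ∈ Icc (0:ℝ) 1) :
    |w s| ≤ greenPotential |w' 1| (fun t => |f t|) s := by
  have hneg := h.neg.le_greenPotential ha hf.neg (by simp [h0]) hs
  simp only [Pi.neg_apply, abs_neg] at hneg
  exact abs_le.mpr ⟨by linarith, h.le_greenPotential ha hf h0 hs⟩

theorem Solves.abs_deriv_le_tailIntegral (h : Solves a f w w') (ha : ContinuousOn a (Icc 0 1))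
    (ha₀ : ∀ s ∈ Icc (0:ℝ) 1, 0 ≤ a s) (hf : ContinuousOn f (Icc 0 1)) (h0 : w 0 = 0)
    (hs : s ∈ Icc (0:ℝ) 1) :
    |w' s| ≤ tailIntegral |w' 1|
      (fun t => |f t| + a t * greenPotential |w' 1| (fun t => |f t|) t) s := by
  refine abs_le_add_integral_of_hasDerivWithinAt (fun t ht => (h t ht).2)
    ((ha.mul h.continuousOn).sub hf)
    (hf.abs.add (ha.mul (continuousOn_greenPotential hf.abs)))
    (fun t ht => ?_) hs
  calc |a t * w t - f t| ≤ a t * |w t| + |f t| := by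
        simpa [abs_mul, abs_of_nonneg (ha₀ t ht)] using abs_sub (a t * w t) (f t)
    _ ≤ |f t| + a t * greenPotential |w' 1| (fun t => |f t|) t := by
        nlinarith [mul_le_mul_of_nonneg_left (h.abs_le_greenPotential ha₀ hf h0 ht) (ha₀ t ht)]

theorem add_integral_rpow_mul_majorant_le {β : ℝ} (ha : ContinuousOn a (Icc 0 1))
    (ha₀ : ∀ s ∈ Icc (0:ℝ) 1, 0 ≤ a s) (hk : ContinuousOn k (Icc 0 1))
    (hk₀ : ∀ t ∈ Icc (0:ℝ) 1, 0 ≤ k t) (hc : 0 ≤ c) (hβ₀ : 0 ≤ β) (hβ₁ : β ≤ 1) :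
    c + ∫ t in (0:ℝ)..1, t ^ β * (k t + a t * greenPotential c k t)
      ≤ (1 + ∫ t in (0:ℝ)..1, t * a t) * (c + ∫ t in (0:ℝ)..1, t ^ β * k t) := by
  set K := c + ∫ t in (0:ℝ)..1, t ^ β * k t
  have hrpow : ContinuousOn (fun t : ℝ => t ^ β) (Icc 0 1) :=
    (Real.continuous_rpow_const hβ₀).continuousOn
  have haχ : IntervalIntegrable (fun t => t ^ β * (a t * greenPotential c k t)) volume 0 1 :=
    (hrpow.mul (ha.mul (continuousOn_greenPotential hk))).intervalIntegrable_of_Icc zero_le_one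
  have hsplit : ∫ t in (0:ℝ)..1, t ^ β * (k t + a t * greenPotential c k t)
      = (∫ t in (0:ℝ)..1, t ^ β * k t)
        + ∫ t in (0:ℝ)..1, t ^ β * (a t * greenPotential c k t) := by
    simp only [mul_add]
    exact integral_add ((hrpow.mul hk).intervalIntegrable_of_Icc zero_le_one) haχ
  have hmono : ∫ t in (0:ℝ)..1, t ^ β * (a t * greenPotential c k t)
      ≤ ∫ t in (0:ℝ)..1, t * a t * K :=
    integral_mono_on zero_le_one haχ
      (((continuousOn_id.mul ha).mul continuousOn_const).intervalIntegrable_of_Icc zero_le_one)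
      fun t ht => by
        have hχt := greenPotential_le_rpow_mul hc hk hk₀ hβ₀ hβ₁ ht
        have htt : t ^ β * t ^ (1 - β) = t := by
          rw [← Real.rpow_add' ht.1 (by norm_num), add_sub_cancel, Real.rpow_one]
        calc t ^ β * (a t * greenPotential c k t) ≤ t ^ β * (a t * (t ^ (1 - β) * K)) := by
              gcongr
              · exact Real.rpow_nonneg ht.1 β
              · exact ha₀ t ht
          _ = t * a t * K := by linear_combination (a t * K) * htt
  rw [intervalIntegral.integral_mul_const] at hmono
  have hK : 0 ≤ K := add_integral_rpow_mul_nonneg hc hk₀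
  rw [hsplit]
  nlinarith

theorem rpow_mul_tailIntegral_le {β : ℝ} (hg : ContinuousOn g (Icc 0 1))
    (hg₀ : ∀ t ∈ Icc (0:ℝ) 1, 0 ≤ g t) (hc : 0 ≤ c) (hβ : 0 ≤ β) (hs : s ∈ Icc (0:ℝ) 1) :
    s ^ β * tailIntegral c g s ≤ c + ∫ t in (0:ℝ)..1, t ^ β * g t := by
  have hw : ContinuousOn (fun t : ℝ => t ^ β * g t) (Icc 0 1) :=
    (Real.continuous_rpow_const hβ).continuousOn.mul hg
  have hsβ : s ^ β ≤ 1 := Real.rpow_le_one hs.1 hs.2 hβ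
  have htail : s ^ β * ∫ t in s..1, g t ≤ ∫ t in s..1, t ^ β * g t := by
    rw [← intervalIntegral.integral_const_mul]
    exact integral_mono_on hs.2
      ((continuousOn_const.mul hg).intervalIntegrable_of_mem hs unitInterval.one_mem)
      (hw.intervalIntegrable_of_mem hs unitInterval.one_mem) fun t ht =>
        mul_le_mul_of_nonneg_right (Real.rpow_le_rpow hs.1 ht.1 hβ) (hg₀ t ⟨hs.1.trans ht.1, ht.2⟩)
  have hhead : 0 ≤ ∫ t in (0:ℝ)..s, t ^ β * g t := integral_nonneg hs.1
    fun t ht => mul_nonneg (Real.rpow_nonneg ht.1 β) (hg₀ t ⟨ht.1, ht.2.trans hs.2⟩)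
  have hsplit := integral_add_adjacent_intervals
    (hw.intervalIntegrable_of_mem unitInterval.zero_mem hs)
    (hw.intervalIntegrable_of_mem hs unitInterval.one_mem)
  unfold tailIntegral
  nlinarith [Real.rpow_nonneg hs.1 β]

theorem integral_rpow_sub_one_mul_tailIntegral {β : ℝ} (hg : ContinuousOn g (Icc 0 1))
    (hβ : 0 < β) :
    β * ∫ s in (0:ℝ)..1, s ^ (β - 1) * tailIntegral c g s = c + ∫ t in (0:ℝ)..1, t ^ β * g t := by
  have hT := continuousOn_tailIntegral (c := c) hg
  have hint : IntervalIntegrable (fun s => s ^ (β - 1) * tailIntegral c g s) volume 0 1 :=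
    (intervalIntegrable_rpow' (by linarith)).mul_continuousOn (by rwa [uIcc_of_le zero_le_one])
  have hw : ContinuousOn (fun t : ℝ => t ^ β * g t) (Icc 0 1) :=
    (Real.continuous_rpow_const hβ.le).continuousOn.mul hg
  have hftc := integral_eq_sub_of_hasDerivAt_of_le zero_le_one
    ((Real.continuous_rpow_const hβ.le).continuousOn.mul hT)
    (fun x hx => ((Real.hasDerivAt_rpow_const (Or.inl hx.1.ne')).mul
      ((hasDerivWithinAt_tailIntegral hg (Ioo_subset_Icc_self hx)).hasDerivAt
        (Icc_mem_nhds hx.1 hx.2))).congr_deriv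
      (show _ = β * (x ^ (β - 1) * tailIntegral c g x) - x ^ β * g x by ring))
    ((hint.const_mul β).sub
      (hw.intervalIntegrable_of_Icc zero_le_one))
  rw [integral_sub (hint.const_mul β) (hw.intervalIntegrable_of_Icc zero_le_one),
    intervalIntegral.integral_const_mul] at hftc
  simp only [Pi.mul_apply, Real.one_rpow, tailIntegral_one, Real.zero_rpow hβ.ne'] at hftc
  linarith

theorem rpow_mul_rpow_eq {s x α q : ℝ} (hs : 0 < s) (hx : 0 ≤ x) (hq : q ≠ 0) :
    (s ^ α * x) ^ q = (s ^ (α + q⁻¹) * x) ^ (q - 1) * (s ^ (α + q⁻¹ - 1) * x) := by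
  rw [Real.mul_rpow (by positivity) hx, Real.mul_rpow (by positivity) hx, ← Real.rpow_mul hs.le,
    ← Real.rpow_mul hs.le]
  have hexp : s ^ (α * q) = s ^ ((α + q⁻¹) * (q - 1)) * s ^ (α + q⁻¹ - 1) := by
    rw [← Real.rpow_add hs]
    congr 1
    field_simp
    ring
  have hbase : x ^ q = x ^ (q - 1) * x := by
    rw [← Real.rpow_add_one' hx (by simpa using hq), sub_add_cancel]
  rw [hexp, hbase]
  ring

theorem integral_rpow_mul_tailIntegral_rpow_le {α q : ℝ} (hg : ContinuousOn g (Icc 0 1))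
    (hg₀ : ∀ t ∈ Icc (0:ℝ) 1, 0 ≤ g t) (hc : 0 ≤ c) (hα : 0 ≤ α) (hq : 1 ≤ q) :
    ∫ s in (0:ℝ)..1, (s ^ α * tailIntegral c g s) ^ q
      ≤ q * (c + ∫ t in (0:ℝ)..1, t ^ (α + q⁻¹) * g t) ^ q := by
  have hq₀ : 0 < q := zero_lt_one.trans_le hq
  set β := α + q⁻¹
  have hβ : 0 < β := by positivity
  set B := c + ∫ t in (0:ℝ)..1, t ^ β * g t
  have hB : 0 ≤ B := add_integral_rpow_mul_nonneg hc hg₀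
  have hT := continuousOn_tailIntegral (c := c) hg
  have hT₀ : ∀ s ∈ Icc (0:ℝ) 1, 0 ≤ tailIntegral c g s := fun _ hs => tailIntegral_nonneg hc hg₀ hs
  have hint : IntervalIntegrable (fun s => s ^ (β - 1) * tailIntegral c g s) volume 0 1 :=
    (intervalIntegrable_rpow' (by linarith)).mul_continuousOn (by rwa [uIcc_of_le zero_le_one])
  have hpt : ∀ s ∈ Ioo (0:ℝ) 1,
      (s ^ α * tailIntegral c g s) ^ q ≤ B ^ (q - 1) * (s ^ (β - 1) * tailIntegral c g s) := by
    intro s hs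
    have hsI := Ioo_subset_Icc_self hs
    rw [rpow_mul_rpow_eq hs.1 (hT₀ s hsI) hq₀.ne']
    exact mul_le_mul_of_nonneg_right (Real.rpow_le_rpow
      (mul_nonneg (Real.rpow_nonneg hs.1.le _) (hT₀ s hsI))
      (rpow_mul_tailIntegral_le hg hg₀ hc hβ.le hsI) (by linarith))
      (mul_nonneg (Real.rpow_nonneg hs.1.le _) (hT₀ s hsI))
  have hmono := integral_mono_on_of_le_Ioo zero_le_one
    ((((Real.continuous_rpow_const hα).continuousOn.mul hT).rpow_const
      fun _ _ => Or.inr hq₀.le).intervalIntegrable_of_Icc zero_le_one)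
    (hint.const_mul _) hpt
  have hid := integral_rpow_sub_one_mul_tailIntegral (c := c) hg hβ
  have hqβ : 1 ≤ q * β := by
    have : q * β = q * α + 1 := by simp only [β]; field_simp
    nlinarith
  rw [intervalIntegral.integral_const_mul] at hmono
  calc _ ≤ B ^ (q - 1) * ∫ s in (0:ℝ)..1, s ^ (β - 1) * tailIntegral c g s := hmono
    _ ≤ B ^ (q - 1) * (q * B) := by
        have hI₀ : 0 ≤ ∫ s in (0:ℝ)..1, s ^ (β - 1) * tailIntegral c g s :=
          integral_nonneg zero_le_one fun s hs => mul_nonneg (Real.rpow_nonneg hs.1 _) (hT₀ s hs)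
        gcongr
        nlinarith
    _ = q * B ^ q := by
        rw [mul_left_comm, ← Real.rpow_add_one' hB (by simpa using hq₀.ne'), sub_add_cancel]

theorem eLpNorm_rpow_mul_tailIntegral_le {α : ℝ} {p : ℝ≥0∞} (hg : ContinuousOn g (Icc 0 1))
    (hg₀ : ∀ t ∈ Icc (0:ℝ) 1, 0 ≤ g t) (hc : 0 ≤ c) (hα : 0 ≤ α) (hp : 1 ≤ p) :
    eLpNorm (fun s => s ^ α * tailIntegral c g s) p (volume.restrict (Ioc 0 1))
      ≤ ENNReal.ofReal (2 * (c + ∫ t in (0:ℝ)..1, t ^ (α + (1 / p).toReal) * g t)) := by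
  have hT₀ : ∀ s ∈ Icc (0:ℝ) 1, 0 ≤ s ^ α * tailIntegral c g s :=
    fun s hs => mul_nonneg (Real.rpow_nonneg hs.1 α) (tailIntegral_nonneg hc hg₀ hs)
  have hB : 0 ≤ c + ∫ t in (0:ℝ)..1, t ^ (α + (1 / p).toReal) * g t :=
    add_integral_rpow_mul_nonneg hc hg₀
  rcases eq_or_ne p ∞ with rfl | hp'
  · rw [eLpNorm_exponent_top]
    refine eLpNormEssSup_le_of_ae_bound ((ae_restrict_iff' measurableSet_Ioc).mpr
      (ae_of_all _ fun s hs => ?_))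
    have hsI : s ∈ Icc (0:ℝ) 1 := Ioc_subset_Icc_self hs
    rw [Real.norm_eq_abs, abs_of_nonneg (hT₀ s hsI)]
    have := rpow_mul_tailIntegral_le hg hg₀ hc hα hsI
    simp only [div_top, toReal_zero, add_zero] at hB ⊢
    linarith
  · have hq : 1 ≤ p.toReal := by simpa using ENNReal.toReal_mono hp' hp
    have hpq : (1 / p).toReal = p.toReal⁻¹ := by rw [one_div, ENNReal.toReal_inv]
    rw [hpq] at hB ⊢
    refine eLpNorm_restrict_Ioc_le_of_integral_rpow_le
      ((Real.continuous_rpow_const hα).continuousOn.mul (continuousOn_tailIntegral hg))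
      zero_le_one (zero_lt_one.trans_le hp).ne' hp' (by positivity) ?_
    have h2q : p.toReal ≤ 2 ^ p.toReal := by
      have := one_add_mul_self_le_rpow_one_add (s := 1) (by norm_num) hq
      norm_num at this
      linarith
    calc ∫ s in (0:ℝ)..1, |s ^ α * tailIntegral c g s| ^ p.toReal
        = ∫ s in (0:ℝ)..1, (s ^ α * tailIntegral c g s) ^ p.toReal :=
          integral_congr fun s hs => by
            rw [abs_of_nonneg (hT₀ s (by rwa [uIcc_of_le zero_le_one] at hs))]
      _ ≤ p.toReal * (c + ∫ t in (0:ℝ)..1, t ^ (α + p.toReal⁻¹) * g t) ^ p.toReal :=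
          integral_rpow_mul_tailIntegral_rpow_le hg hg₀ hc hα hq
      _ ≤ 2 ^ p.toReal * (c + ∫ t in (0:ℝ)..1, t ^ (α + p.toReal⁻¹) * g t) ^ p.toReal := by
          gcongr
      _ = _ := (Real.mul_rpow zero_le_two hB).symm

theorem Solves.eLpNorm_rpow_mul_deriv_le {α : ℝ} {p : ℝ≥0∞} (h : Solves a f w w')
    (ha : ContinuousOn a (Icc 0 1)) (ha₀ : ∀ s ∈ Icc (0:ℝ) 1, 0 ≤ a s)
    (hf : ContinuousOn f (Icc 0 1)) (h0 : w 0 = 0) (hα : 0 ≤ α) (hp : 1 ≤ p) :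
    eLpNorm (fun s => s ^ α * w' s) p (volume.restrict (Ioc 0 1))
      ≤ ENNReal.ofReal (2 * (|w' 1| + ∫ t in (0:ℝ)..1, t ^ (α + (1 / p).toReal) *
          (|f t| + a t * greenPotential |w' 1| (fun t => |f t|) t))) := by
  have hg₀ : ∀ t ∈ Icc (0:ℝ) 1, 0 ≤ |f t| + a t * greenPotential |w' 1| (fun t => |f t|) t :=
    fun t ht => add_nonneg (abs_nonneg _) (mul_nonneg (ha₀ t ht)
      (greenPotential_nonneg (abs_nonneg _) (fun _ _ => abs_nonneg _) ht))
  refine le_trans (eLpNorm_mono_ae ((ae_restrict_iff' measurableSet_Ioc).mpr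
    (ae_of_all _ fun s hs => ?_))) (eLpNorm_rpow_mul_tailIntegral_le
      (hf.abs.add (ha.mul (continuousOn_greenPotential hf.abs))) hg₀ (abs_nonneg _) hα hp)
  have hsI := Ioc_subset_Icc_self hs
  rw [Real.norm_eq_abs, Real.norm_eq_abs, abs_mul, abs_mul,
    abs_of_nonneg (tailIntegral_nonneg (abs_nonneg _) hg₀ hsI)]
  exact mul_le_mul_of_nonneg_left (h.abs_deriv_le_tailIntegral ha ha₀ hf h0 hsI) (abs_nonneg _)

end MixedBVP

open MixedBVP in
theorem stmt_14_general (M : ℝ) :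
    ∃ C > (0:ℝ), ∀ (a h : ℝ → ℝ) (c α : ℝ) (p : ℝ≥0∞),
      ContinuousOn a (Set.Icc 0 1) →
      (∀ s ∈ Set.Icc (0:ℝ) 1, 0 ≤ a s) →
      (∫ σ in (0:ℝ)..1, σ * a σ) ≤ M ^ 2 →
      ContinuousOn h (Set.Icc 0 1) →
      1 ≤ p → 0 ≤ α → α + (1 / p).toReal ≤ 1 →
      ∀ τ τ' : ℝ → ℝ,
        (∀ s ∈ Set.Icc (0:ℝ) 1, HasDerivWithinAt τ (τ' s) (Set.Icc 0 1) s) →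
        (∀ s ∈ Set.Icc (0:ℝ) 1, HasDerivWithinAt τ' (a s * τ s - h s) (Set.Icc 0 1) s) →
        τ 0 = 0 → τ' 1 = c →
        eLpNorm (fun s => s ^ α * τ' s) p (volume.restrict (Set.Ioc (0:ℝ) 1))
          ≤ ENNReal.ofReal
              (C * (|c| + ∫ s in (0:ℝ)..1, s ^ (α + (1 / p).toReal) * |h s|)) := by
  refine ⟨2 * (1 + M ^ 2), by positivity, ?_⟩
  intro a h c α p ha ha₀ haM hh hp hα hαp τ τ' hτ hτ' hτ₀ hc
  subst hc
  have hsol : Solves a h τ τ' := fun s hs => ⟨hτ s hs, hτ' s hs⟩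
  have hmajorant := add_integral_rpow_mul_majorant_le ha ha₀ hh.abs (fun t _ => abs_nonneg (h t))
    (abs_nonneg (τ' 1)) (add_nonneg hα ENNReal.toReal_nonneg) hαp
  have hK := add_integral_rpow_mul_nonneg (β := α + (1 / p).toReal) (abs_nonneg (τ' 1))
    (fun t _ => abs_nonneg (h t))
  refine (hsol.eLpNorm_rpow_mul_deriv_le ha ha₀ hh hτ₀ hα hp).trans (ENNReal.ofReal_le_ofReal ?_)
  nlinarith

/-- Sharp weighted `L^p` estimate for `τ'`, the derivative of the solution of the BVP
`-τ'' + a τ = h`, `τ(0)=0`, `τ'(1)=c`: for `∫₀¹ σ a ≤ M²` there is `C = C(M)` such that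
`‖s^α τ'‖_{L^p} ≤ C(|c| + ∫₀¹ s^{α+1/p}|h|)` whenever `p ∈ [1,∞]`, `α ≥ 0`, `α + 1/p ≤ 1`. -/
theorem stmt_14 (M : ℝ) (hM : 0 < M) :
    ∃ C > (0:ℝ), ∀ (a h : ℝ → ℝ) (c α : ℝ) (p : ℝ≥0∞),
      ContinuousOn a (Set.Icc 0 1) →
      (∀ s ∈ Set.Icc (0:ℝ) 1, 0 ≤ a s) →
      (∫ σ in (0:ℝ)..1, σ * a σ) ≤ M ^ 2 →
      ContinuousOn h (Set.Icc 0 1) →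
      1 ≤ p → 0 ≤ α → α + (1 / p).toReal ≤ 1 →
      ∀ τ τ' : ℝ → ℝ,
        (∀ s ∈ Set.Icc (0:ℝ) 1, HasDerivWithinAt τ (τ' s) (Set.Icc 0 1) s) →
        (∀ s ∈ Set.Icc (0:ℝ) 1, HasDerivWithinAt τ' (a s * τ s - h s) (Set.Icc 0 1) s) →
        τ 0 = 0 → τ' 1 = c →
        eLpNorm (fun s => s ^ α * τ' s) p (volume.restrict (Set.Ioc (0:ℝ) 1))
          ≤ ENNReal.ofReal
              (C * (|c| + ∫ s in (0:ℝ)..1, s ^ (α + (1 / p).toReal) * |h s|)) :=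
  stmt_14_general M
end

section
/- Suppose τ ∈ C¹([0,1]) satisfies C₁⁻¹ s ≤ τ(s) ≤ C₁ s and |τ'(s)| ≤ C₁ for all s ∈ [0,1], for some C₁ ≥ 1. Then there exists C ≥ 1 depending only on C₁ such that for every x ∈ C²([0,1]; ℝ³) with s x'' ∈ L² and x' ∈ L²: C⁻¹(‖s x''‖_{L²} + ‖x'‖_{L²}) ≤ ‖(τ x')'‖_{L²} ≤ C(‖s x''‖_{L²} + ‖x'‖_{L²}). -/
open MeasureTheory Set Filter Topology

/-!
The upper bound holds pointwise, since `(τ x')' = τ' x' + τ x''`, `|τ'| ≤ C₁` and `τ(s) ≤ C₁ s`.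
For the lower bound, `G = τ x'` vanishes at `0`, so Hardy's inequality
`‖G / s‖_{L²} ≤ 2 ‖G'‖_{L²}` and `s ≤ C₁ τ(s)` bound `‖x'‖_{L²}` by `‖(τ x')'‖_{L²}`;
then `s x'' = (s / τ) ((τ x')' - τ' x')` bounds `‖s x''‖_{L²}`.
Hardy's inequality follows by differentiating `‖G‖² / s` on `[ε, b]` and absorbing the cross
term; the boundary term `‖G ε‖² / ε = O(ε)` vanishes as `ε → 0`.
-/

theorem div_sq_le_sq_of_le_mul {r s M : ℝ} (hr : 0 ≤ r) (hs : 0 ≤ s) (h : r ≤ M * s) :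
    (r / s) ^ 2 ≤ M ^ 2 := by
  rcases hs.eq_or_lt with rfl | hs
  · simpa using sq_nonneg M
  · exact pow_le_pow_left₀ (by positivity) ((div_le_iff₀ hs).2 h) 2

section Hardy

variable {E : Type*} [NormedAddCommGroup E] {G f : ℝ → E} {a b : ℝ}

theorem exists_norm_le_mul_of_hasDerivWithinAt [NormedSpace ℝ E] (hG0 : G 0 = 0)
    (hGd : ∀ s ∈ Icc 0 b, HasDerivWithinAt G (f s) (Icc 0 b) s)
    (hf : ContinuousOn f (Icc 0 b)) :
    ∃ M, ∀ s ∈ Icc 0 b, ‖G s‖ ≤ M * s := by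
  obtain ⟨M, hM⟩ := isCompact_Icc.exists_bound_of_continuousOn hf
  refine ⟨M, fun s hs => ?_⟩
  simpa [hG0] using norm_image_sub_le_of_norm_deriv_le_segment' hGd
    (fun s hs => hM s (Ico_subset_Icc_self hs)) s hs

theorem intervalIntegrable_sq_norm_div_of_norm_le_mul {M : ℝ} (hb : 0 ≤ b)
    (hG : ContinuousOn G (Icc 0 b)) (hGM : ∀ s ∈ Icc 0 b, ‖G s‖ ≤ M * s) :
    IntervalIntegrable (fun s => (‖G s‖ / s) ^ 2) volume 0 b := by
  have hcont : ContinuousOn (fun s => (‖G s‖ / s) ^ 2) (Ioc 0 b) := by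
    have hne : ∀ s ∈ Ioc 0 b, s ≠ 0 := fun s hs => hs.1.ne'
    have := hG.mono Ioc_subset_Icc_self
    fun_prop (disch := assumption)
  rw [← uIoc_of_le hb] at hcont
  refine (intervalIntegrable_const (c := M ^ 2)).mono_fun
    (hcont.aestronglyMeasurable measurableSet_uIoc) ?_
  refine (ae_restrict_iff' measurableSet_uIoc).2 (Eventually.of_forall fun s hs => ?_)
  rw [uIoc_of_le hb] at hs
  simp only [Real.norm_eq_abs, abs_pow, sq_abs]
  exact div_sq_le_sq_of_le_mul (norm_nonneg _) hs.1.le (hGM s (Ioc_subset_Icc_self hs))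

variable [InnerProductSpace ℝ E]

theorem integral_sq_norm_div_le_of_pos (ha : 0 < a) (hab : a ≤ b)
    (hGd : ∀ s ∈ Icc a b, HasDerivWithinAt G (f s) (Icc a b) s)
    (hf : ContinuousOn f (Icc a b)) :
    ∫ s in a..b, (‖G s‖ / s) ^ 2 ≤
      4 * (∫ s in a..b, ‖f s‖ ^ 2) + 2 * (‖G a‖ ^ 2 / a) := by
  have hpos : ∀ s ∈ Icc a b, 0 < s := fun s hs => ha.trans_le hs.1
  have hne : ∀ s ∈ Icc a b, s ≠ 0 := fun s hs => (hpos s hs).ne'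
  have hG : ContinuousOn G (Icc a b) := fun s hs => (hGd s hs).continuousWithinAt
  have hint : ∀ {g : ℝ → ℝ}, ContinuousOn g (Icc a b) → IntervalIntegrable g volume a b :=
    fun hg => (uIcc_of_le hab ▸ hg).intervalIntegrable
  set D : ℝ → ℝ := fun s => 2 * (inner ℝ (G s) (f s) / s) - (‖G s‖ / s) ^ 2
  have hD : ∀ s ∈ Ioo a b, HasDerivAt (fun s => ‖G s‖ ^ 2 / s) (D s) s := by
    intro s hs
    have hGs := (hGd s (Ioo_subset_Icc_self hs)).hasDerivAt (Icc_mem_nhds hs.1 hs.2)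
    refine (hGs.norm_sq.div (hasDerivAt_id s) (hne s (Ioo_subset_Icc_self hs))).congr_deriv ?_
    simp only [D, id]
    field_simp [hne s (Ioo_subset_Icc_self hs)]
  have hDc : ContinuousOn D (Icc a b) := by simp only [D]; fun_prop (disch := assumption)
  have hFTC : ∫ s in a..b, D s = ‖G b‖ ^ 2 / b - ‖G a‖ ^ 2 / a :=
    intervalIntegral.integral_eq_sub_of_hasDerivAt_of_le hab
      (by fun_prop (disch := assumption)) hD (hint hDc)
  -- `4‖f‖² - 2D - (‖G‖/s)² = ‖2f - G/s‖²`
  have hpt : ∀ s ∈ Icc a b, (‖G s‖ / s) ^ 2 ≤ 4 * ‖f s‖ ^ 2 - 2 * D s := by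
    intro s hs
    have hcs : inner ℝ (G s) (f s) / s ≤ ‖f s‖ * (‖G s‖ / s) := by
      rw [mul_div_assoc', div_le_div_iff_of_pos_right (hpos s hs), mul_comm]
      exact real_inner_le_norm _ _
    simp only [D]
    nlinarith [sq_nonneg (2 * ‖f s‖ - ‖G s‖ / s)]
  calc ∫ s in a..b, (‖G s‖ / s) ^ 2 ≤ ∫ s in a..b, (4 * ‖f s‖ ^ 2 - 2 * D s) :=
        intervalIntegral.integral_mono_on hab (hint (by fun_prop (disch := assumption)))
          (hint (by fun_prop)) hpt
    _ = 4 * (∫ s in a..b, ‖f s‖ ^ 2) - 2 * (‖G b‖ ^ 2 / b - ‖G a‖ ^ 2 / a) := by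
        rw [intervalIntegral.integral_sub ((hint (by fun_prop)).const_mul 4)
          ((hint hDc).const_mul 2), intervalIntegral.integral_const_mul,
          intervalIntegral.integral_const_mul, hFTC]
    _ ≤ 4 * (∫ s in a..b, ‖f s‖ ^ 2) + 2 * (‖G a‖ ^ 2 / a) := by
        have : 0 ≤ ‖G b‖ ^ 2 / b := div_nonneg (sq_nonneg _) (ha.le.trans hab)
        linarith

theorem integral_sq_norm_div_le_four_mul (hb : 0 < b) (hG0 : G 0 = 0)
    (hGd : ∀ s ∈ Icc 0 b, HasDerivWithinAt G (f s) (Icc 0 b) s)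
    (hf : ContinuousOn f (Icc 0 b)) :
    ∫ s in 0..b, (‖G s‖ / s) ^ 2 ≤ 4 * ∫ s in 0..b, ‖f s‖ ^ 2 := by
  obtain ⟨M, hGM⟩ := exists_norm_le_mul_of_hasDerivWithinAt hG0 hGd hf
  have hq := intervalIntegrable_sq_norm_div_of_norm_le_mul hb.le
    (fun s hs => (hGd s hs).continuousWithinAt) hGM
  have hf2 : IntervalIntegrable (fun s => ‖f s‖ ^ 2) volume 0 b :=
    ContinuousOn.intervalIntegrable (by rw [uIcc_of_le hb.le]; fun_prop)
  have htrunc : ∀ ε ∈ Ioc 0 b, ∫ s in 0..b, (‖G s‖ / s) ^ 2 ≤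
      4 * (∫ s in 0..b, ‖f s‖ ^ 2) + 3 * M ^ 2 * ε := by
    rintro ε ⟨hε, hεb⟩
    have hεmem : ε ∈ uIcc 0 b := mem_uIcc_of_le hε.le hεb
    have hnear : ∫ s in 0..ε, (‖G s‖ / s) ^ 2 ≤ ε * M ^ 2 := by
      simpa using intervalIntegral.integral_mono_on hε.le
        (hq.mono_set (uIcc_subset_uIcc left_mem_uIcc hεmem)) intervalIntegrable_const
        fun s hs => div_sq_le_sq_of_le_mul (norm_nonneg _) hs.1 (hGM s ⟨hs.1, hs.2.trans hεb⟩)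
    have hfar := integral_sq_norm_div_le_of_pos hε hεb
      (fun s hs => (hGd s (Icc_subset_Icc hε.le le_rfl hs)).mono (Icc_subset_Icc hε.le le_rfl))
      (hf.mono (Icc_subset_Icc hε.le le_rfl))
    have hGε : ‖G ε‖ ^ 2 / ε ≤ M ^ 2 * ε := by
      rw [div_le_iff₀ hε]
      nlinarith [hGM ε ⟨hε.le, hεb⟩, norm_nonneg (G ε)]
    have hf_far : ∫ s in ε..b, ‖f s‖ ^ 2 ≤ ∫ s in 0..b, ‖f s‖ ^ 2 := by
      rw [← intervalIntegral.integral_add_adjacent_intervals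
        (hf2.mono_set (uIcc_subset_uIcc left_mem_uIcc hεmem))
        (hf2.mono_set (uIcc_subset_uIcc hεmem right_mem_uIcc))]
      linarith [intervalIntegral.integral_nonneg (μ := volume) hε.le
        fun s _ => sq_nonneg ‖f s‖]
    rw [← intervalIntegral.integral_add_adjacent_intervals
      (hq.mono_set (uIcc_subset_uIcc left_mem_uIcc hεmem))
      (hq.mono_set (uIcc_subset_uIcc hεmem right_mem_uIcc))]
    linarith
  refine ge_of_tendsto (x := 𝓝[>] 0) ?_ (eventually_of_mem (Ioc_mem_nhdsGT hb) htrunc)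
  exact tendsto_nhdsWithin_of_tendsto_nhds (Continuous.tendsto' (by fun_prop) _ _ (by simp))

end Hardy

/-- `‖g‖_{L²(a,b)}`, written with `^ (1 / 2)` rather than `√` so that it unfolds to the
expressions in the main theorem. -/
noncomputable def intervalL2Norm (a b : ℝ) (g : ℝ → ℝ) : ℝ :=
  (∫ s in a..b, g s ^ 2) ^ ((1 : ℝ) / 2)

namespace intervalL2Norm

variable {a b c d : ℝ} {g h k : ℝ → ℝ}

theorem eq_sqrt : intervalL2Norm a b g = √(∫ s in a..b, g s ^ 2) :=
  (Real.sqrt_eq_rpow _).symm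

theorem nonneg : 0 ≤ intervalL2Norm a b g := by
  rw [eq_sqrt]; exact Real.sqrt_nonneg _

theorem sq_of_le (hab : a ≤ b) : intervalL2Norm a b g ^ 2 = ∫ s in a..b, g s ^ 2 := by
  rw [eq_sqrt, Real.sq_sqrt (intervalIntegral.integral_nonneg hab fun s _ => sq_nonneg (g s))]

theorem le_of_integral_le {C : ℝ} (hC : 0 ≤ C)
    (hle : ∫ s in a..b, g s ^ 2 ≤ C ^ 2) : intervalL2Norm a b g ≤ C := by
  rw [eq_sqrt, Real.sqrt_le_left hC]; exact hle

theorem le_mul_of_integral_le (hab : a ≤ b) (hc : 0 ≤ c)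
    (hle : ∫ s in a..b, g s ^ 2 ≤ c ^ 2 * ∫ s in a..b, h s ^ 2) :
    intervalL2Norm a b g ≤ c * intervalL2Norm a b h := by
  rw [eq_sqrt, Real.sqrt_le_left (mul_nonneg hc nonneg), mul_pow, sq_of_le hab]
  exact hle

theorem le_mul (hab : a ≤ b) (hc : 0 ≤ c)
    (hg : IntervalIntegrable (fun s => g s ^ 2) volume a b)
    (hh : IntervalIntegrable (fun s => h s ^ 2) volume a b)
    (hle : ∀ s ∈ Ioo a b, |g s| ≤ c * |h s|) :
    intervalL2Norm a b g ≤ c * intervalL2Norm a b h := by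
  refine le_mul_of_integral_le hab hc ?_
  rw [← intervalIntegral.integral_const_mul]
  refine intervalIntegral.integral_mono_on_of_le_Ioo hab hg (hh.const_mul _) fun s hs => ?_
  rw [← sq_abs (g s), ← sq_abs (h s), ← mul_pow]
  exact pow_le_pow_left₀ (abs_nonneg _) (hle s hs) 2

theorem le_two_mul_add (hab : a ≤ b) (hc : 0 ≤ c) (hd : 0 ≤ d)
    (hg : IntervalIntegrable (fun s => g s ^ 2) volume a b)
    (hh : IntervalIntegrable (fun s => h s ^ 2) volume a b)
    (hk : IntervalIntegrable (fun s => k s ^ 2) volume a b)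
    (hle : ∀ s ∈ Ioo a b, |g s| ≤ c * |h s| + d * |k s|) :
    intervalL2Norm a b g ≤ 2 * (c * intervalL2Norm a b h + d * intervalL2Norm a b k) := by
  have hpt : ∀ s ∈ Ioo a b, g s ^ 2 ≤ 2 * c ^ 2 * h s ^ 2 + 2 * d ^ 2 * k s ^ 2 := by
    intro s hs
    rw [← sq_abs (g s), ← sq_abs (h s), ← sq_abs (k s)]
    nlinarith [hle s hs, abs_nonneg (g s), sq_nonneg (c * |h s| - d * |k s|)]
  have hint : ∫ s in a..b, g s ^ 2 ≤
      2 * c ^ 2 * intervalL2Norm a b h ^ 2 + 2 * d ^ 2 * intervalL2Norm a b k ^ 2 := by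
    rw [sq_of_le hab, sq_of_le hab, ← intervalIntegral.integral_const_mul,
      ← intervalIntegral.integral_const_mul, ← intervalIntegral.integral_add
        (hh.const_mul _) (hk.const_mul _)]
    exact intervalIntegral.integral_mono_on_of_le_Ioo hab hg
      ((hh.const_mul _).add (hk.const_mul _)) hpt
  have := @nonneg a b h
  have := @nonneg a b k
  refine le_of_integral_le (by positivity) ?_
  nlinarith [mul_nonneg (mul_nonneg hc hd) (mul_nonneg (@nonneg a b h) (@nonneg a b k))]

end intervalL2Norm

section Pointwise

variable {E : Type*} [NormedAddCommGroup E] [NormedSpace ℝ E] {C s t t' : ℝ} {v w : E}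

theorem norm_smul_add_smul_le (ht : 0 ≤ t) (htC : t ≤ C * s) (ht' : |t'| ≤ C) :
    ‖t' • v + t • w‖ ≤ C * ‖v‖ + C * (s * ‖w‖) := by
  refine (norm_add_le _ _).trans ?_
  rw [norm_smul, norm_smul, Real.norm_eq_abs, Real.norm_eq_abs, abs_of_nonneg ht, ← mul_assoc]
  gcongr

theorem mul_norm_le_of_smul_add_smul (hC : 0 ≤ C) (ht : 0 ≤ t) (hst : s ≤ C * t)
    (ht' : |t'| ≤ C) : s * ‖w‖ ≤ C * ‖t' • v + t • w‖ + C ^ 2 * ‖v‖ := by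
  have htw : t * ‖w‖ ≤ ‖t' • v + t • w‖ + C * ‖v‖ := by
    calc t * ‖w‖ = ‖(t' • v + t • w) - t' • v‖ := by
          rw [add_sub_cancel_left, norm_smul, Real.norm_eq_abs, abs_of_nonneg ht]
      _ ≤ ‖t' • v + t • w‖ + |t'| * ‖v‖ := by
          rw [← Real.norm_eq_abs, ← norm_smul]; exact norm_sub_le _ _
      _ ≤ ‖t' • v + t • w‖ + C * ‖v‖ := by gcongr
  calc s * ‖w‖ ≤ C * (t * ‖w‖) := by rw [← mul_assoc]; gcongr
    _ ≤ C * (‖t' • v + t • w‖ + C * ‖v‖) := by gcongr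
    _ = C * ‖t' • v + t • w‖ + C ^ 2 * ‖v‖ := by ring

theorem norm_le_mul_norm_smul_div (hs : 0 < s) (ht : 0 ≤ t) (hst : s ≤ C * t) :
    ‖v‖ ≤ C * (‖t • v‖ / s) := by
  rw [norm_smul, Real.norm_eq_abs, abs_of_nonneg ht, mul_div_assoc', le_div_iff₀ hs,
    ← mul_assoc, mul_comm]
  gcongr

end Pointwise

section DegenerateOperator

variable {E : Type*} [NormedAddCommGroup E] {τ τ' : ℝ → ℝ} {x' x'' : ℝ → E} {b C : ℝ}

theorem intervalL2Norm_smul_add_smul_le [NormedSpace ℝ E] (hb : 0 ≤ b) (hC : 0 ≤ C)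
    (hτ : ContinuousOn τ (Icc 0 b)) (hτ' : ContinuousOn τ' (Icc 0 b))
    (hx' : ContinuousOn x' (Icc 0 b)) (hx'' : ContinuousOn x'' (Icc 0 b))
    (hτ_nonneg : ∀ s ∈ Icc 0 b, 0 ≤ τ s) (hτ_le : ∀ s ∈ Icc 0 b, τ s ≤ C * s)
    (hτ'_le : ∀ s ∈ Icc 0 b, |τ' s| ≤ C) :
    intervalL2Norm 0 b (fun s => ‖τ' s • x' s + τ s • x'' s‖) ≤
      2 * C * (intervalL2Norm 0 b (fun s => s * ‖x'' s‖) +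
        intervalL2Norm 0 b (fun s => ‖x' s‖)) := by
  have hint : ∀ {g : ℝ → ℝ}, ContinuousOn g (Icc 0 b) →
      IntervalIntegrable (fun s => g s ^ 2) volume 0 b :=
    fun hg => (uIcc_of_le hb ▸ hg.pow 2).intervalIntegrable
  refine (intervalL2Norm.le_two_mul_add (h := fun s => ‖x' s‖) (k := fun s => s * ‖x'' s‖)
    hb hC hC (hint (by fun_prop)) (hint hx'.norm) (hint (by fun_prop)) fun s hs => ?_).trans_eq
    (by ring)
  simp only [abs_norm, abs_mul, abs_of_pos hs.1]
  exact norm_smul_add_smul_le (hτ_nonneg s (Ioo_subset_Icc_self hs))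
    (hτ_le s (Ioo_subset_Icc_self hs)) (hτ'_le s (Ioo_subset_Icc_self hs))

theorem intervalL2Norm_mul_norm_le [NormedSpace ℝ E] (hb : 0 ≤ b) (hC : 0 ≤ C)
    (hτ : ContinuousOn τ (Icc 0 b)) (hτ' : ContinuousOn τ' (Icc 0 b))
    (hx' : ContinuousOn x' (Icc 0 b)) (hx'' : ContinuousOn x'' (Icc 0 b))
    (hτ_nonneg : ∀ s ∈ Icc 0 b, 0 ≤ τ s) (hle_τ : ∀ s ∈ Icc 0 b, s ≤ C * τ s)
    (hτ'_le : ∀ s ∈ Icc 0 b, |τ' s| ≤ C) :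
    intervalL2Norm 0 b (fun s => s * ‖x'' s‖) ≤
      2 * (C * intervalL2Norm 0 b (fun s => ‖τ' s • x' s + τ s • x'' s‖) +
        C ^ 2 * intervalL2Norm 0 b (fun s => ‖x' s‖)) := by
  have hint : ∀ {g : ℝ → ℝ}, ContinuousOn g (Icc 0 b) →
      IntervalIntegrable (fun s => g s ^ 2) volume 0 b :=
    fun hg => (uIcc_of_le hb ▸ hg.pow 2).intervalIntegrable
  refine intervalL2Norm.le_two_mul_add hb hC (sq_nonneg C) (hint (by fun_prop))
    (hint (by fun_prop)) (hint hx'.norm) fun s hs => ?_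
  simp only [abs_norm, abs_mul, abs_of_pos hs.1]
  exact mul_norm_le_of_smul_add_smul hC (hτ_nonneg s (Ioo_subset_Icc_self hs))
    (hle_τ s (Ioo_subset_Icc_self hs)) (hτ'_le s (Ioo_subset_Icc_self hs))

theorem intervalL2Norm_norm_le [InnerProductSpace ℝ E] (hb : 0 < b) (hC : 0 ≤ C)
    (hτd : ∀ s ∈ Icc 0 b, HasDerivWithinAt τ (τ' s) (Icc 0 b) s)
    (hτ' : ContinuousOn τ' (Icc 0 b))
    (hx'd : ∀ s ∈ Icc 0 b, HasDerivWithinAt x' (x'' s) (Icc 0 b) s)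
    (hx'' : ContinuousOn x'' (Icc 0 b)) (hτ0 : τ 0 = 0)
    (hτ_nonneg : ∀ s ∈ Icc 0 b, 0 ≤ τ s) (hle_τ : ∀ s ∈ Icc 0 b, s ≤ C * τ s) :
    intervalL2Norm 0 b (fun s => ‖x' s‖) ≤
      2 * C * intervalL2Norm 0 b (fun s => ‖τ' s • x' s + τ s • x'' s‖) := by
  have hτ : ContinuousOn τ (Icc 0 b) := fun s hs => (hτd s hs).continuousWithinAt
  have hx' : ContinuousOn x' (Icc 0 b) := fun s hs => (hx'd s hs).continuousWithinAt
  have hGd : ∀ s ∈ Icc 0 b,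
      HasDerivWithinAt (fun s => τ s • x' s) (τ' s • x' s + τ s • x'' s) (Icc 0 b) s :=
    fun s hs => (add_comm (τ s • x'' s) _) ▸ (hτd s hs).smul (hx'd s hs)
  have hf : ContinuousOn (fun s => τ' s • x' s + τ s • x'' s) (Icc 0 b) := by fun_prop
  have hG0 : τ 0 • x' 0 = 0 := by rw [hτ0, zero_smul]
  obtain ⟨M, hGM⟩ := exists_norm_le_mul_of_hasDerivWithinAt hG0 hGd hf
  have hq := intervalIntegrable_sq_norm_div_of_norm_le_mul hb.le (by fun_prop) hGM
  calc intervalL2Norm 0 b (fun s => ‖x' s‖)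
      ≤ C * intervalL2Norm 0 b (fun s => ‖τ s • x' s‖ / s) := by
        refine intervalL2Norm.le_mul hb.le hC
          ((uIcc_of_le hb.le ▸ hx'.norm.pow 2).intervalIntegrable) hq fun s hs => ?_
        rw [abs_norm, abs_of_nonneg (div_nonneg (norm_nonneg _) hs.1.le)]
        exact norm_le_mul_norm_smul_div hs.1 (hτ_nonneg s (Ioo_subset_Icc_self hs))
          (hle_τ s (Ioo_subset_Icc_self hs))
    _ ≤ C * (2 * intervalL2Norm 0 b (fun s => ‖τ' s • x' s + τ s • x'' s‖)) := by
        gcongr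
        refine intervalL2Norm.le_mul_of_integral_le hb.le zero_le_two ?_
        rw [show (2 : ℝ) ^ 2 = 4 by norm_num]
        exact integral_sq_norm_div_le_four_mul hb hG0 hGd hf
    _ = _ := by ring

end DegenerateOperator

/-- Norm equivalence for the degenerate elliptic operator `A_τ x = -(τ x')'` under
the stability condition `C₁⁻¹ s ≤ τ(s) ≤ C₁ s`, `|τ'| ≤ C₁`: there is `C = C(C₁) ≥ 1`
with `C⁻¹(‖s x''‖_{L²} + ‖x'‖_{L²}) ≤ ‖(τ x')'‖_{L²} ≤ C(‖s x''‖_{L²} + ‖x'‖_{L²})`. -/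
theorem stmt_18 (C₁ : ℝ) (hC₁ : 1 ≤ C₁) :
    ∃ C ≥ (1:ℝ), ∀ (τ τ' : ℝ → ℝ) (x x' x'' : ℝ → EuclideanSpace ℝ (Fin 3)),
      (∀ s ∈ Set.Icc (0:ℝ) 1, HasDerivWithinAt τ (τ' s) (Set.Icc 0 1) s) →
      ContinuousOn τ' (Set.Icc 0 1) →
      (∀ s ∈ Set.Icc (0:ℝ) 1, C₁⁻¹ * s ≤ τ s ∧ τ s ≤ C₁ * s ∧ |τ' s| ≤ C₁) →
      (∀ s ∈ Set.Icc (0:ℝ) 1, HasDerivWithinAt x (x' s) (Set.Icc 0 1) s) →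
      (∀ s ∈ Set.Icc (0:ℝ) 1, HasDerivWithinAt x' (x'' s) (Set.Icc 0 1) s) →
      ContinuousOn x'' (Set.Icc 0 1) →
      C⁻¹ * ((∫ s in (0:ℝ)..1, (s * ‖x'' s‖) ^ 2) ^ ((1:ℝ) / 2) +
          (∫ s in (0:ℝ)..1, ‖x' s‖ ^ 2) ^ ((1:ℝ) / 2))
        ≤ (∫ s in (0:ℝ)..1, ‖τ' s • x' s + τ s • x'' s‖ ^ 2) ^ ((1:ℝ) / 2) ∧
      (∫ s in (0:ℝ)..1, ‖τ' s • x' s + τ s • x'' s‖ ^ 2) ^ ((1:ℝ) / 2)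
        ≤ C * ((∫ s in (0:ℝ)..1, (s * ‖x'' s‖) ^ 2) ^ ((1:ℝ) / 2) +
          (∫ s in (0:ℝ)..1, ‖x' s‖ ^ 2) ^ ((1:ℝ) / 2)) := by
  have hC₁0 : 0 < C₁ := zero_lt_one.trans_le hC₁
  have hC₁3 : C₁ ≤ C₁ ^ 3 := le_self_pow₀ hC₁ (by norm_num)
  refine ⟨8 * C₁ ^ 3, by nlinarith, fun τ τ' _ x' x'' hτd hτ' hbounds _ hx'd hx'' => ?_⟩
  have hτ_nonneg : ∀ s ∈ Icc 0 1, 0 ≤ τ s := fun s hs =>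
    (mul_nonneg (inv_nonneg.2 hC₁0.le) hs.1).trans (hbounds s hs).1
  have hle_τ : ∀ s ∈ Icc 0 1, s ≤ C₁ * τ s := fun s hs =>
    (inv_mul_le_iff₀ hC₁0).1 (hbounds s hs).1
  have hτ0 : τ 0 = 0 :=
    le_antisymm (by simpa using (hbounds 0 ⟨le_rfl, zero_le_one⟩).2.1)
      (hτ_nonneg 0 ⟨le_rfl, zero_le_one⟩)
  have hτ : ContinuousOn τ (Icc 0 1) := fun s hs => (hτd s hs).continuousWithinAt
  have hx' : ContinuousOn x' (Icc 0 1) := fun s hs => (hx'd s hs).continuousWithinAt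
  have hupper := intervalL2Norm_smul_add_smul_le zero_le_one hC₁0.le hτ hτ' hx' hx'' hτ_nonneg
    (fun s hs => (hbounds s hs).2.1) (fun s hs => (hbounds s hs).2.2)
  have hx'L := intervalL2Norm_norm_le one_pos hC₁0.le hτd hτ' hx'd hx'' hτ0 hτ_nonneg hle_τ
  have hx''L := intervalL2Norm_mul_norm_le zero_le_one hC₁0.le hτ hτ' hx' hx'' hτ_nonneg hle_τ
    (fun s hs => (hbounds s hs).2.2)
  set L₁ := intervalL2Norm 0 1 (fun s => s * ‖x'' s‖)
  set L₂ := intervalL2Norm 0 1 (fun s => ‖x' s‖)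
  set Lf := intervalL2Norm 0 1 (fun s => ‖τ' s • x' s + τ s • x'' s‖)
  change (8 * C₁ ^ 3)⁻¹ * (L₁ + L₂) ≤ Lf ∧ Lf ≤ 8 * C₁ ^ 3 * (L₁ + L₂)
  have hLf : 0 ≤ Lf := intervalL2Norm.nonneg
  have hL : 0 ≤ L₁ + L₂ := add_nonneg intervalL2Norm.nonneg intervalL2Norm.nonneg
  constructor
  · rw [inv_mul_le_iff₀ (by positivity)]
    nlinarith [mul_le_mul_of_nonneg_left hx'L (sq_nonneg C₁),
      mul_le_mul_of_nonneg_right hC₁3 hLf]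
  · nlinarith [mul_le_mul_of_nonneg_right hC₁3 hL]
end
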